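/- Let M = M(h₁,r₁;…;hₙ,rₙ) and M' = M(h'₁,r'₁;…;h'ₘ,r'ₘ) be monotone graded roots. If their standard complexes with reflection involutions (C_*(M), J₀) and (C_*(M'), J₀') are locally equivalent ι-complexes, then n = m, h_i = h'_i and r_i = r'_i for all i, so M = M'. -/

import Mathlib

open Polynomial

noncomputable section

abbrev F2 : Type := ZMod 2
abbrev F2U : Type := Polynomial F2

/-- Homology of a module endomorphism viewed as a differential. -/
abbrev Hmlgy {M : Type} [AddCommGroup M] [Module F2U M] (f : M →ₗ[F2U] M) : Type :=
  ↥(LinearMap.ker f) ⧸ (LinearMap.range f).comap (LinearMap.ker f).subtype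

/-- An ι-complex: a ℚ-graded, finitely generated, free chain complex `C` over `𝔽₂[U]`
(`deg U = −2`), supported in gradings differing from some `τ ∈ ℚ` by integers, with
`U⁻¹H_*(C) ≅ 𝔽₂[U,U⁻¹]` (expressed by the `tail` field: there is a `U`-nontorsion cycle
`z` such that any `U`-nontorsion cycle agrees with a `U`-power of `z` up to `U`-powers
and boundaries), together with a grading-preserving chain map `ι` with `ι²` chain
homotopic to the identity (over `𝔽₂`, signs are irrelevant). -/
structure IotaCx where
  C : Type
  [acg : AddCommGroup C]
  [mod : Module F2U C]
  d : C →ₗ[F2U] C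
  iota : C →ₗ[F2U] C
  gr : ℚ → AddSubgroup C
  dd : d ∘ₗ d = 0
  chain : d ∘ₗ iota = iota ∘ₗ d
  internal : DirectSum.IsInternal fun g : ℚ => AddSubgroup.toIntSubmodule (gr g)
  d_homog : ∀ g : ℚ, ∀ x ∈ gr g, d x ∈ gr (g - 1)
  iota_homog : ∀ g : ℚ, ∀ x ∈ gr g, iota x ∈ gr g
  U_homog : ∀ g : ℚ, ∀ x ∈ gr g, (X : F2U) • x ∈ gr (g - 2)
  free : Module.Free F2U C
  fg : Module.Finite F2U C
  tau : ℚ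
  tau_supp : ∀ g : ℚ, gr g ≠ ⊥ → ∃ k : ℤ, g = tau + k
  iota_sq : ∃ H : C →ₗ[F2U] C,
    iota ∘ₗ iota + LinearMap.id = d ∘ₗ H + H ∘ₗ d
  tail : ∃ z : C, d z = 0 ∧ (∀ n : ℕ, (X : F2U) ^ n • z ∉ LinearMap.range d) ∧
    ∀ w : C, d w = 0 → (∀ n : ℕ, (X : F2U) ^ n • w ∉ LinearMap.range d) →
      ∃ a b : ℕ, (X : F2U) ^ a • z + (X : F2U) ^ b • w ∈ LinearMap.range d

attribute [instance] IotaCx.acg IotaCx.mod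

namespace IotaCx

variable (A : IotaCx)

/-- The differential `∂' = ∂ + Q(1+ι)` of the involutive complex
`I⁻(C, ι) = Cone(Q(1+ι) : C → Q·C[−1])`, on `C × Q·C`. -/
def coneD : (A.C × A.C) →ₗ[F2U] (A.C × A.C) :=
  (A.d ∘ₗ LinearMap.fst F2U A.C A.C).prod
    (LinearMap.fst F2U A.C A.C + A.iota ∘ₗ LinearMap.fst F2U A.C A.C
      + A.d ∘ₗ LinearMap.snd F2U A.C A.C)

/-- Multiplication by `Q` on the involutive complex: `(x, Qy) ↦ (0, Qx)`. -/
def coneQ : (A.C × A.C) →ₗ[F2U] (A.C × A.C) :=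
  (0 : (A.C × A.C) →ₗ[F2U] A.C).prod (LinearMap.fst F2U A.C A.C)

/-- The class `z` of the involutive homology `HI⁻ = H(Cone(Q(1+ι)))` lies in grading `r`:
it is represented by a cycle `(x, Qy)` with `x` of degree `r` and `y` of degree `r+1`
(so that `Qy` has degree `r`). -/
def HIgrade (r : ℚ) (z : Hmlgy A.coneD) : Prop :=
  ∃ c : LinearMap.ker A.coneD, c.val.1 ∈ A.gr r ∧ c.val.2 ∈ A.gr (r + 1) ∧
    Submodule.Quotient.mk c = z

/-- The class `z ∈ HI⁻` lies in the image of (the map on homology induced by) `Q`. -/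
def inImQ (z : Hmlgy A.coneD) : Prop :=
  ∃ (c : LinearMap.ker A.coneD) (hq : A.coneQ c.val ∈ LinearMap.ker A.coneD),
    z = Submodule.Quotient.mk (⟨A.coneQ c.val, hq⟩ : LinearMap.ker A.coneD)

/-- The set of gradings `r` of classes `x ∈ HI⁻_r` with `Uⁿx ≠ 0` for all `n` and
`U^m x ∈ Im Q` for some `m`; the invariant `d̄` is the maximum of this set plus `2`. -/
def dbarSet : Set ℚ :=
  { r | ∃ z : Hmlgy A.coneD, A.HIgrade r z ∧ (∀ n : ℕ, (X : F2U) ^ n • z ≠ 0) ∧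
      ∃ m : ℕ, A.inImQ ((X : F2U) ^ m • z) }

/-- The set of gradings `r` of classes `x ∈ HI⁻_r` with `Uⁿx ≠ 0` and `Uⁿx ∉ Im Q` for
all `n`; the invariant `d̲` is the maximum of this set plus `1`. -/
def dlowSet : Set ℚ :=
  { r | ∃ z : Hmlgy A.coneD, A.HIgrade r z ∧
      ∀ n : ℕ, (X : F2U) ^ n • z ≠ 0 ∧ ¬ A.inImQ ((X : F2U) ^ n • z) }

/-- The class `z ∈ H_*(C)` lies in grading `r`. -/
def HCgrade (r : ℚ) (z : Hmlgy A.d) : Prop :=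
  ∃ c : LinearMap.ker A.d, c.val ∈ A.gr r ∧ Submodule.Quotient.mk c = z

/-- The set of gradings `r` of classes `x ∈ H_r(C)` with `Uⁿx ≠ 0` for all `n`;
the ordinary correction term `d` is the maximum of this set plus `2`. -/
def dSet : Set ℚ :=
  { r | ∃ z : Hmlgy A.d, A.HCgrade r z ∧ ∀ n : ℕ, (X : F2U) ^ n • z ≠ 0 }

end IotaCx

/-- A local map of ι-complexes: a grading-preserving chain map commuting with the
involutions up to chain homotopy and inducing an isomorphism on homology after
inverting `U` (its kernel and cokernel on homology are `U`-torsion). -/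
def isLocalMap (A B : IotaCx) (F : A.C →ₗ[F2U] B.C) : Prop :=
  F ∘ₗ A.d = B.d ∘ₗ F ∧
  (∀ g : ℚ, ∀ x ∈ A.gr g, F x ∈ B.gr g) ∧
  (∃ H : A.C →ₗ[F2U] B.C, F ∘ₗ A.iota + B.iota ∘ₗ F = B.d ∘ₗ H + H ∘ₗ A.d) ∧
  (∀ z : A.C, A.d z = 0 → F z ∈ LinearMap.range B.d →
    ∃ n : ℕ, (X : F2U) ^ n • z ∈ LinearMap.range A.d) ∧
  (∀ z : B.C, B.d z = 0 →
    ∃ (n : ℕ) (w : A.C), A.d w = 0 ∧ (X : F2U) ^ n • z + F w ∈ LinearMap.range B.d)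

/-- Local equivalence of ι-complexes: local maps in both directions. -/
def LocalEquiv (A B : IotaCx) : Prop :=
  (∃ F, isLocalMap A B F) ∧ (∃ G, isLocalMap B A G)

/-- Equivalence of ι-complexes: grading-preserving chain homotopy equivalences `F`, `G`
which are homotopy inverse to each other and homotopy-commute with the involutions. -/
def IotaEquiv (A B : IotaCx) : Prop :=
  ∃ (F : A.C →ₗ[F2U] B.C) (G : B.C →ₗ[F2U] A.C),
    F ∘ₗ A.d = B.d ∘ₗ F ∧ G ∘ₗ B.d = A.d ∘ₗ G ∧
    (∀ g : ℚ, ∀ x ∈ A.gr g, F x ∈ B.gr g) ∧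
    (∀ g : ℚ, ∀ x ∈ B.gr g, G x ∈ A.gr g) ∧
    (∃ H : A.C →ₗ[F2U] A.C, G ∘ₗ F + LinearMap.id = A.d ∘ₗ H + H ∘ₗ A.d) ∧
    (∃ H : B.C →ₗ[F2U] B.C, F ∘ₗ G + LinearMap.id = B.d ∘ₗ H + H ∘ₗ B.d) ∧
    (∃ H : A.C →ₗ[F2U] B.C, F ∘ₗ A.iota + B.iota ∘ₗ F = B.d ∘ₗ H + H ∘ₗ A.d) ∧
    (∃ H : B.C →ₗ[F2U] A.C, G ∘ₗ B.iota + A.iota ∘ₗ G = A.d ∘ₗ H + H ∘ₗ B.d)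

/-- A monotone graded root `M(h₁,r₁;…;hₘ,rₘ)`: rationals `h₁ > … > hₘ` and
`r₁ < … < rₘ` with `rᵢ ≤ hᵢ`, all congruent modulo `2ℤ`.  It has an infinite stem
topped at degree `rₘ` and, for each `i`, a symmetric pair of leaves of degree `hᵢ`
attached to the stem at degree `rᵢ`. -/
structure MonotoneRoot where
  m : ℕ
  hm : 0 < m
  h : Fin m → ℚ
  r : Fin m → ℚ
  h_anti : StrictAnti h
  r_mono : StrictMono r
  hr : ∀ i, r i ≤ h i
  parity : ∀ i j, ∃ k : ℤ, h i - r j = 2 * k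

namespace MonotoneRoot

variable (M : MonotoneRoot)

/-- Degrees of the `2m` leaves `v₁, …, vₘ, J₀vₘ, …, J₀v₁` of a monotone root,
in left-to-right order. -/
def lDeg (i : ℕ) : ℚ :=
  if h1 : i < M.m then M.h ⟨i, h1⟩
  else if h2 : 2 * M.m - 1 - i < M.m then M.h ⟨2 * M.m - 1 - i, h2⟩ else 0

/-- Degrees of the `2m − 1` angles of a monotone root, in left-to-right order
(the central angle, with index `m − 1`, has degree `rₘ`). -/
def aDeg (i : ℕ) : ℚ :=
  if h1 : i < M.m then M.r ⟨i, h1⟩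
  else if h2 : 2 * M.m - 2 - i < M.m then M.r ⟨2 * M.m - 2 - i, h2⟩ else 0

end MonotoneRoot

/-- `A` is the standard complex, with reflection involution `J₀`, of the graded-root
data with `N` leaves of degrees `L 0, …, L (N-1)` and `N − 1` angles of degrees
`Ad 0, …, Ad (N-2)`: it has an `𝔽₂[U]`-basis of even generators `v i` (of degree `L i`,
which are cycles) and odd generators `a i` (of degree `Ad i + 1`), with
`∂ (a i) = U^{(L i − Ad i)/2} • v i + U^{(L (i+1) − Ad i)/2} • v (i+1)`, and with the
involution given by `ι (v i) = v (N−1−i)`, `ι (a i) = a (N−2−i)`. -/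
def IsStdCxData (A : IotaCx) (N : ℕ) (L Ad : ℕ → ℚ) : Prop :=
  ∃ (v : ℕ → A.C) (a : ℕ → A.C),
    LinearIndependent F2U
      (Sum.elim (fun i : {i : ℕ // i < N} => v i)
        (fun j : {i : ℕ // i + 1 < N} => a j)) ∧
    Submodule.span F2U (v '' {i | i < N} ∪ a '' {i | i + 1 < N}) = ⊤ ∧
    (∀ i, i < N → A.d (v i) = 0) ∧
    (∀ i, i + 1 < N → A.d (a i) =
      (X : F2U) ^ (⌊(L i - Ad i) / 2⌋).toNat • v i
        + (X : F2U) ^ (⌊(L (i + 1) - Ad i) / 2⌋).toNat • v (i + 1)) ∧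
    (∀ i, i < N → A.iota (v i) = v (N - 1 - i)) ∧
    (∀ i, i + 1 < N → A.iota (a i) = a (N - 2 - i)) ∧
    (∀ i, i < N → v i ∈ A.gr (L i)) ∧
    (∀ i, i + 1 < N → a i ∈ A.gr (Ad i + 1))

/-- `A` is (equivalent to) the standard complex of the monotone graded root `M`,
with its reflection involution `J₀`. -/
def IsStandardCx (A : IotaCx) (M : MonotoneRoot) : Prop :=
  IsStdCxData A (2 * M.m) M.lDeg M.aDeg

/-- `T` is the tensor product over `𝔽₂[U]` of the ι-complexes `A 0, …, A (k-1)`: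
there is an `𝔽₂[U]`-linear identification of `T.C` with `⨂_i (A i).C` under which the
differential, the involution (`ι₁ ⊗ ⋯ ⊗ ι_k`) and the grading of `T` are the tensor
product differential, involution and grading. -/
def IsTensorFamily {k : ℕ} (T : IotaCx) (A : Fin k → IotaCx) : Prop :=
  ∃ e : T.C ≃ₗ[F2U] PiTensorProduct F2U fun i => (A i).C,
    (∀ x : (i : Fin k) → (A i).C,
      T.d (e.symm (PiTensorProduct.tprod F2U x)) =
        ∑ i : Fin k, e.symm (PiTensorProduct.tprod F2U
          (Function.update x i ((A i).d (x i))))) ∧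
    (∀ x : (i : Fin k) → (A i).C,
      T.iota (e.symm (PiTensorProduct.tprod F2U x)) =
        e.symm (PiTensorProduct.tprod F2U fun i => (A i).iota (x i))) ∧
    (∀ (g : Fin k → ℚ) (x : (i : Fin k) → (A i).C), (∀ i, x i ∈ (A i).gr (g i)) →
      e.symm (PiTensorProduct.tprod F2U x) ∈ T.gr (∑ i, g i))

/-- `T` is the tensor product over `𝔽₂[U]` of the ι-complexes `A` and `B`,
with involution `ι_A ⊗ ι_B` and the tensor product differential and grading. -/
def IsTensorOf (T A B : IotaCx) : Prop :=
  ∃ e : T.C ≃ₗ[F2U] TensorProduct F2U A.C B.C,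
    (∀ (x : A.C) (y : B.C),
      T.d (e.symm (x ⊗ₜ[F2U] y)) = e.symm ((A.d x) ⊗ₜ[F2U] y + x ⊗ₜ[F2U] (B.d y))) ∧
    (∀ (x : A.C) (y : B.C),
      T.iota (e.symm (x ⊗ₜ[F2U] y)) = e.symm ((A.iota x) ⊗ₜ[F2U] (B.iota y))) ∧
    (∀ (g₁ g₂ : ℚ) (x : A.C) (y : B.C), x ∈ A.gr g₁ → y ∈ B.gr g₂ →
      e.symm (x ⊗ₜ[F2U] y) ∈ T.gr (g₁ + g₂))

/-- `S` is the ι-complex `T` with all gradings shifted up by `t` (so `S = T[−t]`):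
there is an identification of the underlying complexes and involutions under which
the degree-`g` part of `T` is the degree-`(g+t)` part of `S`. -/
def IsShiftOf (S T : IotaCx) (t : ℚ) : Prop :=
  ∃ e : S.C ≃ₗ[F2U] T.C,
    (∀ x : S.C, T.d (e x) = e (S.d x)) ∧
    (∀ x : S.C, T.iota (e x) = e (S.iota x)) ∧
    (∀ (g : ℚ) (x : T.C), x ∈ T.gr g ↔ e.symm x ∈ S.gr (g + t))

open scoped Classical in
/-- `toN q = some m` iff `q` is the nonnegative integer `m`. -/
def toN (q : ℚ) : Option ℕ := if h : ∃ m : ℕ, (m : ℚ) = q then some h.choose else none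

lemma toN_eq_some {q : ℚ} {m : ℕ} : toN q = some m ↔ (m : ℚ) = q := by
  constructor
  · intro h
    rw [toN] at h
    split at h
    · rename_i he
      have h1 := he.choose_spec
      have h2 : he.choose = m := by injection h
      rwa [h2] at h1
    · simp at h
  · intro h
    rw [toN, dif_pos ⟨m, h⟩]
    have h1 := (Exists.intro m h : ∃ m : ℕ, (m:ℚ) = q).choose_spec
    have : (Exists.intro m h : ∃ m : ℕ, (m:ℚ) = q).choose = m := by
      exact_mod_cast h1.trans h.symm
    rw [this]

lemma toN_natCast (m : ℕ) : toN (m : ℚ) = some m := toN_eq_some.2 rfl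

lemma toN_none {q : ℚ} : toN q = none ↔ ¬ ∃ m : ℕ, (m : ℚ) = q := by
  constructor
  · intro h hc
    rw [toN, dif_pos hc] at h
    simp at h
  · intro h
    rw [toN, dif_neg h]

lemma toN_isSome {q : ℚ} : (toN q).isSome ↔ ∃ m : ℕ, (m : ℚ) = q := by
  rcases h : toN q with _ | m
  · simpa using (toN_none.1 h)
  · simp only [Option.isSome_some, true_iff]
    exact ⟨m, toN_eq_some.1 h⟩

lemma toN_add_nat {q : ℚ} {m : ℕ} (h : toN q = some m) (p : ℕ) :
    toN (q + p) = some (m + p) := by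
  rw [toN_eq_some] at h ⊢
  push_cast
  rw [h]

lemma finApp {m : ℕ} {a b : ℕ} (ha : a < m) (hb : b < m) (h : a = b) (f : Fin m → ℚ) :
    f ⟨a, ha⟩ = f ⟨b, hb⟩ := by subst h; rfl

namespace MonotoneRoot

variable (M : MonotoneRoot)

lemma lDeg_left {i : ℕ} (h : i < M.m) : M.lDeg i = M.h ⟨i, h⟩ := by
  rw [lDeg, dif_pos h]

lemma lDeg_right {i : ℕ} (h1 : M.m ≤ i) (h2 : i < 2 * M.m)
    (h3 : 2 * M.m - 1 - i < M.m := by omega) :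
    M.lDeg i = M.h ⟨2 * M.m - 1 - i, h3⟩ := by
  rw [lDeg, dif_neg (by omega), dif_pos h3]

lemma aDeg_left {l : ℕ} (h : l < M.m) : M.aDeg l = M.r ⟨l, h⟩ := by
  rw [aDeg, dif_pos h]

lemma aDeg_right {l : ℕ} (h1 : M.m ≤ l) (h2 : l < 2 * M.m - 1)
    (h3 : 2 * M.m - 2 - l < M.m := by omega) :
    M.aDeg l = M.r ⟨2 * M.m - 2 - l, h3⟩ := by
  rw [aDeg, dif_neg (by omega), dif_pos h3]

lemma lDeg_symm {i : ℕ} (h : i < 2 * M.m) : M.lDeg (2 * M.m - 1 - i) = M.lDeg i := by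
  have hm := M.hm
  rcases lt_or_ge i M.m with hc | hc
  · have h1 : M.m ≤ 2 * M.m - 1 - i := by omega
    rw [M.lDeg_right h1 (by omega) (by omega), M.lDeg_left hc]
    exact finApp _ _ (by omega) M.h
  · have h1 : 2 * M.m - 1 - i < M.m := by omega
    rw [M.lDeg_left h1, M.lDeg_right hc h]

lemma aDeg_symm {l : ℕ} (h : l < 2 * M.m - 1) :
    M.aDeg (2 * M.m - 2 - l) = M.aDeg l := by
  have hm := M.hm
  rcases lt_or_ge l M.m with hc | hc
  · rcases lt_or_ge (2 * M.m - 2 - l) M.m with hd | hd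
    · rw [M.aDeg_left hd, M.aDeg_left hc]
      exact finApp _ _ (by omega) M.r
    · rw [M.aDeg_right hd (by omega) (by omega), M.aDeg_left hc]
      exact finApp _ _ (by omega) M.r
  · have h1 : 2 * M.m - 2 - l < M.m := by omega
    rw [M.aDeg_left h1, M.aDeg_right hc h]

lemma aDeg_min {l : ℕ} (h : l < 2 * M.m - 1)
    (h3 : min l (2 * M.m - 2 - l) < M.m := by omega) :
    M.aDeg l = M.r ⟨min l (2 * M.m - 2 - l), h3⟩ := by
  rcases lt_or_ge l M.m with hc | hc
  · rw [M.aDeg_left hc]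
    exact finApp _ _ (by omega) M.r
  · rw [M.aDeg_right hc h]
    exact finApp _ _ (by omega) M.r

lemma aDeg_mono {i l : ℕ} (hi : i < M.m) (h1 : i ≤ l) (h2 : l ≤ 2 * M.m - 2 - i) :
    M.aDeg i ≤ M.aDeg l := by
  have hm := M.hm
  have hl : l < 2 * M.m - 1 := by omega
  rw [M.aDeg_left hi, M.aDeg_min hl]
  exact M.r_mono.monotone (by simp only [Fin.mk_le_mk]; omega)

lemma aDeg_le_lDeg {l : ℕ} (h : l + 1 < 2 * M.m) : M.aDeg l ≤ M.lDeg l := by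
  have hm := M.hm
  rcases lt_or_ge l M.m with hc | hc
  · rw [M.aDeg_left hc, M.lDeg_left hc]
    exact M.hr _
  · have h3 : 2 * M.m - 2 - l < M.m := by omega
    rw [M.aDeg_right hc (by omega) h3, M.lDeg_right hc (by omega) (by omega)]
    calc M.r ⟨2*M.m-2-l, h3⟩ ≤ M.r ⟨2*M.m-1-l, by omega⟩ := by
          exact M.r_mono.monotone (by simp only [Fin.mk_le_mk]; omega)
      _ ≤ M.h ⟨2*M.m-1-l, by omega⟩ := M.hr _

lemma aDeg_le_lDeg' {l : ℕ} (h : l + 1 < 2 * M.m) : M.aDeg l ≤ M.lDeg (l + 1) := by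
  have hm := M.hm
  rcases lt_or_ge (l+1) M.m with hc | hc
  · rw [M.aDeg_left (by omega), M.lDeg_left hc]
    calc M.r ⟨l, by omega⟩ ≤ M.r ⟨l+1, hc⟩ := by
          exact M.r_mono.monotone (by simp only [Fin.mk_le_mk]; omega)
      _ ≤ M.h ⟨l+1, hc⟩ := M.hr _
  · rcases lt_or_ge l M.m with hd | hd
    · rw [M.aDeg_left hd, M.lDeg_right hc (by omega) (by omega)]
      calc M.r ⟨l, hd⟩ ≤ M.h ⟨l, hd⟩ := M.hr _
        _ = M.h ⟨2*M.m-1-(l+1), by omega⟩ := finApp _ _ (by omega) M.h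
    · rw [M.aDeg_right hd (by omega) (by omega), M.lDeg_right (by omega) (by omega) (by omega)]
      have h3 : 2 * M.m - 2 - l < M.m := by omega
      calc M.r ⟨2*M.m-2-l, h3⟩ ≤ M.h ⟨2*M.m-2-l, h3⟩ := M.hr _
        _ = M.h ⟨2*M.m-1-(l+1), by omega⟩ := finApp _ _ (by omega) M.h

lemma parity_la {i l : ℕ} (hi : i < 2 * M.m) (hl : l < 2 * M.m - 1) :
    ∃ k : ℤ, M.lDeg i - M.aDeg l = 2 * k := by
  have hm := M.hm
  have h1 : ∃ a : Fin M.m, M.lDeg i = M.h a := by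
    rcases lt_or_ge i M.m with hc | hc
    · exact ⟨_, M.lDeg_left hc⟩
    · exact ⟨_, M.lDeg_right hc hi⟩
  have h2 : ∃ b : Fin M.m, M.aDeg l = M.r b := by
    rcases lt_or_ge l M.m with hc | hc
    · exact ⟨_, M.aDeg_left hc⟩
    · exact ⟨_, M.aDeg_right hc hl⟩
  obtain ⟨a, ha⟩ := h1
  obtain ⟨b, hb⟩ := h2
  obtain ⟨k, hk⟩ := M.parity a b
  exact ⟨k, by rw [ha, hb]; exact_mod_cast hk⟩

lemma parity_ll {i j : ℕ} (hi : i < 2 * M.m) (hj : j < 2 * M.m) :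
    ∃ k : ℤ, M.lDeg i - M.lDeg j = 2 * k := by
  have hm := M.hm
  obtain ⟨k1, h1⟩ := M.parity_la hi (l := 0) (by omega)
  obtain ⟨k2, h2⟩ := M.parity_la hj (l := 0) (by omega)
  exact ⟨k1 - k2, by push_cast; linarith⟩

lemma parity_aa {i j : ℕ} (hi : i < 2 * M.m - 1) (hj : j < 2 * M.m - 1) :
    ∃ k : ℤ, M.aDeg i - M.aDeg j = 2 * k := by
  have hm := M.hm
  obtain ⟨k1, h1⟩ := M.parity_la (i := 0) (by omega) hi
  obtain ⟨k2, h2⟩ := M.parity_la (i := 0) (by omega) hj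
  exact ⟨k2 - k1, by push_cast; linarith⟩

lemma even1 {l : ℕ} (h : l + 1 < 2 * M.m) :
    ∃ mm : ℕ, (mm : ℚ) * 2 = M.lDeg l - M.aDeg l := by
  obtain ⟨k, hk⟩ := M.parity_la (i := l) (l := l) (by omega) (by omega)
  have h2 := M.aDeg_le_lDeg h
  have hk0 : 0 ≤ k := by
    by_contra hc
    push_neg at hc
    have : (k : ℚ) < 0 := by exact_mod_cast hc
    linarith
  exact ⟨k.toNat, by rw [hk, ← Int.toNat_of_nonneg hk0]; push_cast; ring_nf; norm_cast⟩

lemma even2 {l : ℕ} (h : l + 1 < 2 * M.m) :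
    ∃ mm : ℕ, (mm : ℚ) * 2 = M.lDeg (l + 1) - M.aDeg l := by
  obtain ⟨k, hk⟩ := M.parity_la (i := l + 1) (l := l) (by omega) (by omega)
  have h2 := M.aDeg_le_lDeg' h
  have hk0 : 0 ≤ k := by
    by_contra hc
    push_neg at hc
    have : (k : ℚ) < 0 := by exact_mod_cast hc
    linarith
  exact ⟨k.toNat, by rw [hk, ← Int.toNat_of_nonneg hk0]; push_cast; ring_nf; norm_cast⟩

end MonotoneRoot
abbrev Idx (N : ℕ) : Type := {i : ℕ // i < N} ⊕ {i : ℕ // i + 1 < N}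

/-- Unbundled data of a standard complex. -/
structure StdData (Bc : IotaCx) (N : ℕ) (L Ad : ℕ → ℚ) where
  v : ℕ → Bc.C
  a : ℕ → Bc.C
  indep : LinearIndependent F2U
      (Sum.elim (fun i : {i : ℕ // i < N} => v i) (fun j : {i : ℕ // i + 1 < N} => a j))
  spanTop : Submodule.span F2U (v '' {i | i < N} ∪ a '' {i | i + 1 < N}) = ⊤
  dv : ∀ i, i < N → Bc.d (v i) = 0
  da : ∀ i, i + 1 < N → Bc.d (a i) =
      (X : F2U) ^ (⌊(L i - Ad i) / 2⌋).toNat • v i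
        + (X : F2U) ^ (⌊(L (i + 1) - Ad i) / 2⌋).toNat • v (i + 1)
  iv : ∀ i, i < N → Bc.iota (v i) = v (N - 1 - i)
  ia : ∀ i, i + 1 < N → Bc.iota (a i) = a (N - 2 - i)
  gv : ∀ i, i < N → v i ∈ Bc.gr (L i)
  ga : ∀ i, i + 1 < N → a i ∈ Bc.gr (Ad i + 1)
  evenLA : ∀ l, l + 1 < N → ∃ mm : ℕ, (mm : ℚ) * 2 = L l - Ad l
  evenLA' : ∀ l, l + 1 < N → ∃ mm : ℕ, (mm : ℚ) * 2 = L (l + 1) - Ad l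

/-- A standard complex of a monotone root yields a `StdData`. -/
lemma isStandardCx_stdData {A : IotaCx} {M : MonotoneRoot} (hA : IsStandardCx A M) :
    Nonempty (StdData A (2 * M.m) M.lDeg M.aDeg) := by
  obtain ⟨v, a, h1, h2, h3, h4, h5, h6, h7, h8⟩ := hA
  exact ⟨⟨v, a, h1, h2, h3, h4, h5, h6, h7, h8,
    fun l hl => M.even1 hl, fun l hl => M.even2 hl⟩⟩

namespace StdData

variable {Bc : IotaCx} {N : ℕ} {L Ad : ℕ → ℚ} (S : StdData Bc N L Ad)

/-- The basis given by the generators. -/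
def bas : Module.Basis (Idx N) F2U Bc.C := by
  refine Module.Basis.mk S.indep ?_
  rw [top_le_iff, ← S.spanTop]
  congr 1
  rw [Set.Sum.elim_range]
  congr 1
  · ext y
    constructor
    · rintro ⟨⟨i, hi⟩, rfl⟩
      exact ⟨i, hi, rfl⟩
    · rintro ⟨i, hi, rfl⟩
      exact ⟨⟨i, hi⟩, rfl⟩
  · ext y
    constructor
    · rintro ⟨⟨i, hi⟩, rfl⟩
      exact ⟨i, hi, rfl⟩
    · rintro ⟨i, hi, rfl⟩
      exact ⟨⟨i, hi⟩, rfl⟩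

/-- `v`-coordinate of `x`. -/
def cV (x : Bc.C) (j : ℕ) : F2U :=
  if h : j < N then S.bas.repr x (Sum.inl ⟨j, h⟩) else 0

/-- `a`-coordinate of `x`. -/
def cA (x : Bc.C) (l : ℕ) : F2U :=
  if h : l + 1 < N then S.bas.repr x (Sum.inr ⟨l, h⟩) else 0

end StdData

/-- exponent of `U` in `∂(a l)` on `v l`. -/
def al (L Ad : ℕ → ℚ) (l : ℕ) : ℕ := (⌊(L l - Ad l) / 2⌋).toNat

/-- exponent of `U` in `∂(a l)` on `v (l+1)`. -/
def be (L Ad : ℕ → ℚ) (l : ℕ) : ℕ := (⌊(L (l + 1) - Ad l) / 2⌋).toNat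

namespace StdData

variable {Bc : IotaCx} {N : ℕ} {L Ad : ℕ → ℚ}

lemma al_spec (S : StdData Bc N L Ad) {l : ℕ} (h : l + 1 < N) : ((al L Ad l : ℚ)) = (L l - Ad l) / 2 := by
  obtain ⟨mm, hmm⟩ := S.evenLA l h
  have h1 : (L l - Ad l) / 2 = (mm : ℚ) := by rw [← hmm]; ring
  rw [al, h1]
  norm_num

lemma be_spec (S : StdData Bc N L Ad) {l : ℕ} (h : l + 1 < N) : ((be L Ad l : ℚ)) = (L (l + 1) - Ad l) / 2 := by
  obtain ⟨mm, hmm⟩ := S.evenLA' l h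
  have h1 : (L (l + 1) - Ad l) / 2 = (mm : ℚ) := by rw [← hmm]; ring
  rw [be, h1]
  norm_num

variable (S : StdData Bc N L Ad)

lemma da' {l : ℕ} (h : l + 1 < N) :
    Bc.d (S.a l) = (X : F2U) ^ (al L Ad l) • S.v l + (X : F2U) ^ (be L Ad l) • S.v (l + 1) :=
  S.da l h

@[simp] lemma cV_zero (j : ℕ) : S.cV 0 j = 0 := by
  unfold cV
  split <;> simp

lemma cV_add (x y : Bc.C) (j : ℕ) : S.cV (x + y) j = S.cV x j + S.cV y j := by
  unfold cV
  split <;> simp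

lemma cV_smul (c : F2U) (x : Bc.C) (j : ℕ) : S.cV (c • x) j = c * S.cV x j := by
  unfold cV
  split <;> simp

lemma cV_sum {α : Type} (T : Finset α) (f : α → Bc.C) (j : ℕ) :
    S.cV (∑ i ∈ T, f i) j = ∑ i ∈ T, S.cV (f i) j := by
  classical
  induction T using Finset.induction with
  | empty => simp
  | insert _ _ hne ih => rw [Finset.sum_insert hne, Finset.sum_insert hne, cV_add, ih]

lemma cV_v {j' : ℕ} (hj' : j' < N) (j : ℕ) :
    S.cV (S.v j') j = if j = j' then 1 else 0 := by
  unfold cV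
  have hb : S.v j' = S.bas (Sum.inl ⟨j', hj'⟩) := by rw [bas, Module.Basis.mk_apply]; rfl
  split
  · rename_i h
    rw [hb, Module.Basis.repr_self, Finsupp.single_apply]
    by_cases he : j = j'
    · subst he
      simp
    · rw [if_neg, if_neg he]
      intro hc
      injection hc with hc'
      exact he (congrArg Subtype.val hc').symm
  · rw [if_neg (by omega)]

lemma cA_v {j' : ℕ} (hj' : j' < N) (l : ℕ) : S.cA (S.v j') l = 0 := by
  unfold cA
  have hb : S.v j' = S.bas (Sum.inl ⟨j', hj'⟩) := by rw [bas, Module.Basis.mk_apply]; rfl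
  split
  · rw [hb, Module.Basis.repr_self, Finsupp.single_apply, if_neg]
    intro hc
    cases hc
  · rfl

lemma cV_a {l' : ℕ} (hl' : l' + 1 < N) (j : ℕ) : S.cV (S.a l') j = 0 := by
  unfold cV
  have hb : S.a l' = S.bas (Sum.inr ⟨l', hl'⟩) := by rw [bas, Module.Basis.mk_apply]; rfl
  split
  · rw [hb, Module.Basis.repr_self, Finsupp.single_apply, if_neg]
    intro hc
    cases hc
  · rfl

lemma cA_a {l' : ℕ} (hl' : l' + 1 < N) (l : ℕ) :
    S.cA (S.a l') l = if l = l' then 1 else 0 := by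
  unfold cA
  have hb : S.a l' = S.bas (Sum.inr ⟨l', hl'⟩) := by rw [bas, Module.Basis.mk_apply]; rfl
  split
  · rename_i h
    rw [hb, Module.Basis.repr_self, Finsupp.single_apply]
    by_cases he : l = l'
    · subst he
      simp
    · rw [if_neg, if_neg he]
      intro hc
      injection hc with hc'
      exact he (congrArg Subtype.val hc').symm
  · rw [if_neg (by omega)]

/-- The level-`g` coefficient functional supported on the columns in `Sf`. -/
def theta (Sf : Finset ℕ) (g : ℚ) (x : Bc.C) : F2 :=
  ∑ j ∈ Sf, ((toN ((L j - g) / 2)).elim 0 fun m => (S.cV x j).coeff m)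

@[simp] lemma theta_zero (Sf : Finset ℕ) (g : ℚ) : S.theta Sf g 0 = 0 := by
  unfold theta
  refine Finset.sum_eq_zero fun j _ => ?_
  rcases toN ((L j - g) / 2) with _ | m <;> simp

lemma theta_add (Sf : Finset ℕ) (g : ℚ) (x y : Bc.C) :
    S.theta Sf g (x + y) = S.theta Sf g x + S.theta Sf g y := by
  unfold theta
  rw [← Finset.sum_add_distrib]
  refine Finset.sum_congr rfl fun j _ => ?_
  rcases toN ((L j - g) / 2) with _ | m <;> simp [cV_add]

lemma theta_sum {α : Type} (Sf : Finset ℕ) (g : ℚ) (T : Finset α) (f : α → Bc.C) :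
    S.theta Sf g (∑ i ∈ T, f i) = ∑ i ∈ T, S.theta Sf g (f i) := by
  classical
  induction T using Finset.induction with
  | empty => simp
  | insert _ _ hne ih => rw [Finset.sum_insert hne, Finset.sum_insert hne, theta_add, ih]

lemma theta_smul_v (Sf : Finset ℕ) (g : ℚ) (q : F2U) {j0 : ℕ} (hj0 : j0 < N) :
    S.theta Sf g (q • S.v j0) =
      if j0 ∈ Sf then (toN ((L j0 - g) / 2)).elim 0 (fun m => q.coeff m) else 0 := by
  unfold theta
  rw [← Finset.sum_ite_eq' Sf j0
    (fun j => (toN ((L j - g) / 2)).elim 0 (fun m => q.coeff m))]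
  refine Finset.sum_congr rfl fun j _ => ?_
  rw [cV_smul, cV_v S hj0]
  by_cases he : j = j0
  · subst he
    simp
  · rw [if_neg he, if_neg he, mul_zero]
    rcases toN ((L j - g) / 2) with _ | m <;> simp

end StdData
namespace StdData

variable {Bc : IotaCx} {N : ℕ} {L Ad : ℕ → ℚ} (S : StdData Bc N L Ad)

lemma d_expand (w : Bc.C) :
    Bc.d w = ∑ idx ∈ (S.bas.repr w).support, (S.bas.repr w idx) • Bc.d (S.bas idx) := by
  conv_lhs => rw [← S.bas.linearCombination_repr w]
  rw [Finsupp.linearCombination_apply, Finsupp.sum, map_sum]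
  refine Finset.sum_congr rfl fun idx _ => ?_
  rw [LinearMap.map_smul]

theorem theta_d_eq_zero (Sf : Finset ℕ) (g : ℚ)
    (hcl : ∀ l, l + 1 < N → (toN ((Ad l - g) / 2)).isSome → (l ∈ Sf ↔ l + 1 ∈ Sf))
    (w : Bc.C) : S.theta Sf g (Bc.d w) = 0 := by
  rw [S.d_expand w, theta_sum]
  refine Finset.sum_eq_zero fun idx _ => ?_
  rcases idx with ⟨j, hj⟩ | ⟨l, hl⟩
  · rw [show S.bas (Sum.inl ⟨j, hj⟩) = S.v j from by rw [bas, Module.Basis.mk_apply]; rfl,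
      S.dv j hj, smul_zero, theta_zero]
  · rw [show S.bas (Sum.inr ⟨l, hl⟩) = S.a l from by rw [bas, Module.Basis.mk_apply]; rfl,
      S.da' hl, smul_add, smul_smul, smul_smul, theta_add,
      theta_smul_v S Sf g _ (by omega), theta_smul_v S Sf g _ (by omega)]
    set c := S.bas.repr w (Sum.inr ⟨l, hl⟩) with hc
    have hal := S.al_spec hl
    have hbe := S.be_spec hl
    rcases hsome : toN ((Ad l - g) / 2) with _ | m
    · have t1 : ((toN ((L l - g) / 2)).elim 0 fun mm => (c * X ^ al L Ad l).coeff mm) = 0 := by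
        rcases h1 : toN ((L l - g) / 2) with _ | mm
        · rfl
        · simp only [Option.elim]
          rw [coeff_mul_X_pow']
          split
          · rename_i hle
            exfalso
            have hmm := toN_eq_some.1 h1
            refine toN_none.1 hsome ⟨mm - al L Ad l, ?_⟩
            push_cast [Nat.cast_sub hle]
            linarith
          · rfl
      have t2 : ((toN ((L (l+1) - g) / 2)).elim 0 fun mm => (c * X ^ be L Ad l).coeff mm) = 0 := by
        rcases h2 : toN ((L (l+1) - g) / 2) with _ | mm
        · rfl
        · simp only [Option.elim]
          rw [coeff_mul_X_pow']
          split
          · rename_i hle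
            exfalso
            have hmm := toN_eq_some.1 h2
            refine toN_none.1 hsome ⟨mm - be L Ad l, ?_⟩
            push_cast [Nat.cast_sub hle]
            linarith
          · rfl
      rw [t1, t2]
      simp
    · have hm := toN_eq_some.1 hsome
      have h1 : toN ((L l - g) / 2) = some (m + al L Ad l) := by
        rw [toN_eq_some]
        push_cast
        linarith
      have h2 : toN ((L (l + 1) - g) / 2) = some (m + be L Ad l) := by
        rw [toN_eq_some]
        push_cast
        linarith
      rw [h1, h2]
      simp only [Option.elim]
      rw [coeff_mul_X_pow, coeff_mul_X_pow]
      have hiff := hcl l hl (by rw [hsome]; rfl)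
      by_cases hin : l ∈ Sf
      · rw [if_pos hin, if_pos (hiff.1 hin)]
        exact CharTwo.add_self_eq_zero _
      · rw [if_neg hin, if_neg (fun hcon => hin (hiff.2 hcon)), add_zero]

lemma theta_boundary (Sf : Finset ℕ) (g : ℚ)
    (hcl : ∀ l, l + 1 < N → (toN ((Ad l - g) / 2)).isSome → (l ∈ Sf ↔ l + 1 ∈ Sf))
    {x : Bc.C} (hx : x ∈ LinearMap.range Bc.d) : S.theta Sf g x = 0 := by
  obtain ⟨w, rfl⟩ := hx
  exact S.theta_d_eq_zero Sf g hcl w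

lemma pow_smul_v_not_bdry {j0 : ℕ} (hj0 : j0 < N) (p : ℕ) :
    (X : F2U) ^ p • S.v j0 ∉ LinearMap.range Bc.d := by
  intro hx
  have h0 := S.theta_boundary (Finset.range N) (L j0 - 2 * p)
    (fun l hl _ => by
      constructor <;> intro _ <;> rw [Finset.mem_range] <;> omega) hx
  rw [theta_smul_v S _ _ _ hj0, if_pos (Finset.mem_range.2 hj0)] at h0
  have he : (L j0 - (L j0 - 2 * p)) / 2 = ((p : ℕ) : ℚ) := by push_cast; ring
  rw [he, toN_natCast] at h0
  simp only [Option.elim, coeff_X_pow, if_pos rfl] at h0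
  exact one_ne_zero h0

end StdData
/-- degree of a basis index. -/
def degIdx (L Ad : ℕ → ℚ) {N : ℕ} (idx : Idx N) : ℚ :=
  Sum.elim (fun j : {i : ℕ // i < N} => L j.val) (fun l : {i : ℕ // i + 1 < N} => Ad l.val + 1) idx

namespace StdData

variable {Bc : IotaCx} {N : ℕ} {L Ad : ℕ → ℚ} (S : StdData Bc N L Ad)

lemma pow_smul_mem {y : Bc.C} {u : ℚ} (hy : y ∈ Bc.gr u) (m : ℕ) :
    (X : F2U) ^ m • y ∈ Bc.gr (u - 2 * m) := by
  induction m with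
  | zero => simpa using hy
  | succ k ih =>
      have h1 : (X : F2U) ^ (k + 1) • y = (X : F2U) • ((X : F2U) ^ k • y) := by
        rw [pow_succ, mul_comm, mul_smul]
      rw [h1]
      have h2 := Bc.U_homog _ _ ih
      have h3 : u - 2 * (k : ℚ) - 2 = u - 2 * ((k : ℕ) + 1 : ℕ) := by push_cast; ring
      rwa [h3] at h2

lemma bas_mem (idx : Idx N) : S.bas idx ∈ Bc.gr (degIdx L Ad idx) := by
  rcases idx with ⟨j, hj⟩ | ⟨l, hl⟩
  · rw [show S.bas (Sum.inl ⟨j, hj⟩) = S.v j from by rw [bas, Module.Basis.mk_apply]; rfl]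
    exact S.gv j hj
  · rw [show S.bas (Sum.inr ⟨l, hl⟩) = S.a l from by rw [bas, Module.Basis.mk_apply]; rfl]
    exact S.ga l hl

lemma smulC_mem (e : F2) {y : Bc.C} {u : ℚ} (hy : y ∈ Bc.gr u) :
    (Polynomial.C e) • y ∈ Bc.gr u := by
  have he : e = 0 ∨ e = 1 := by fin_cases e <;> [exact Or.inl rfl; exact Or.inr rfl]
  rcases he with rfl | rfl
  · rw [map_zero, zero_smul]
    exact (Bc.gr u).zero_mem
  · rw [map_one, one_smul]
    exact hy

lemma grade_unique {D : Finset ℚ} {Y : ℚ → Bc.C} (hY : ∀ d ∈ D, Y d ∈ Bc.gr d)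
    {x : Bc.C} {g : ℚ} (hx : x ∈ Bc.gr g)
    (hsum : ∑ d ∈ D, Y d = x) {d0 : ℚ} (hd0 : d0 ∈ D) (hne : d0 ≠ g) : Y d0 = 0 := by
  classical
  set fam := fun q : ℚ => AddSubgroup.toIntSubmodule (Bc.gr q) with hfam
  let YY : DirectSum ℚ (fun q => fam q) :=
    ∑ d ∈ D.attach, DirectSum.of (fun q => fam q) d.val
      ⟨Y d.val, hY d.val d.prop⟩
  let XX : DirectSum ℚ (fun q => fam q) :=
    DirectSum.of (fun q => fam q) g ⟨x, hx⟩
  have hcoe : DirectSum.coeAddMonoidHom fam YY = DirectSum.coeAddMonoidHom fam XX := by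
    show DirectSum.coeAddMonoidHom fam (∑ d ∈ D.attach, _) = _
    rw [map_sum]
    simp only [DirectSum.coeAddMonoidHom_of]
    rw [Finset.sum_attach D (fun d => Y d), hsum]
    exact (DirectSum.coeAddMonoidHom_of fam g ⟨x, hx⟩).symm
  have hYX : YY = XX := Bc.internal.injective hcoe
  have hev : YY d0 = XX d0 := by rw [hYX]
  have hXX0 : XX d0 = 0 := DirectSum.of_eq_of_ne _ _ _ hne
  have hYY : YY d0 = ⟨Y d0, hY d0 hd0⟩ := by
    show (∑ d ∈ D.attach, DirectSum.of (fun q => fam q) d.val _) d0 = _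
    rw [DFinsupp.finset_sum_apply]
    rw [Finset.sum_eq_single (⟨d0, hd0⟩ : {d // d ∈ D})]
    · exact DirectSum.of_eq_same _ _
    · intro b _ hbne
      refine DirectSum.of_eq_of_ne _ _ _ ?_
      intro hc
      exact hbne (Subtype.ext hc.symm)
    · intro hc
      exact absurd (Finset.mem_attach _ _) hc
  have := hYY.symm.trans (hev.trans hXX0)
  exact congrArg Subtype.val this

theorem coeff_grade {x : Bc.C} {g : ℚ} (hx : x ∈ Bc.gr g) (idx : Idx N) (m : ℕ)
    (hne : degIdx L Ad idx - 2 * m ≠ g) : (S.bas.repr x idx).coeff m = 0 := by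
  classical
  set c := S.bas.repr x with hc
  by_cases hsupp : idx ∈ c.support
  swap
  · rw [Finsupp.notMem_support_iff.1 hsupp]
    simp
  set Mb := 1 + c.support.sup (fun i => (c i).natDegree) with hMb
  by_cases hmM : m < Mb
  swap
  · refine Polynomial.coeff_eq_zero_of_natDegree_lt ?_
    have h2 := Finset.le_sup (f := fun i => (c i).natDegree) hsupp
    omega
  set T := c.support ×ˢ Finset.range Mb with hT
  set dg : Idx N × ℕ → ℚ := fun p => degIdx L Ad p.1 - 2 * p.2 with hdg
  set D := T.image dg with hD
  set Y : ℚ → Bc.C := fun d =>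
    ∑ p ∈ T, (if dg p = d then (Polynomial.C ((c p.1).coeff p.2) * X ^ p.2) else 0) • S.bas p.1
    with hY
  have hYmem : ∀ d ∈ D, Y d ∈ Bc.gr d := by
    intro d _
    refine AddSubgroup.sum_mem _ fun p _ => ?_
    by_cases hcond : dg p = d
    · rw [if_pos hcond, mul_smul]
      refine smulC_mem _ ?_
      have hmem := pow_smul_mem (S.bas_mem p.1) p.2
      rwa [show degIdx L Ad p.1 - 2 * p.2 = d from hcond] at hmem
    · rw [if_neg hcond, zero_smul]
      exact (Bc.gr d).zero_mem
  have hsum : ∑ d ∈ D, Y d = x := by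
    simp only [hY]
    rw [Finset.sum_comm]
    have hstep : ∀ p ∈ T,
        (∑ d ∈ D, (if dg p = d then (Polynomial.C ((c p.1).coeff p.2) * X ^ p.2) else 0) • S.bas p.1)
          = (Polynomial.C ((c p.1).coeff p.2) * X ^ p.2) • S.bas p.1 := by
      intro p hp
      rw [← Finset.sum_smul, Finset.sum_ite_eq D (dg p)]
      rw [if_pos (Finset.mem_image_of_mem dg hp)]
    rw [Finset.sum_congr rfl hstep, hT, Finset.sum_product]
    have hinner : ∀ idx' ∈ c.support,
        (∑ m' ∈ Finset.range Mb, (Polynomial.C ((c idx').coeff m') * X ^ m') • S.bas idx')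
          = (c idx') • S.bas idx' := by
      intro idx' hs
      rw [← Finset.sum_smul]
      congr 1
      have hdeg : (c idx').natDegree < Mb := by
        have h2 := Finset.le_sup (f := fun i => (c i).natDegree) hs
        omega
      conv_rhs => rw [Polynomial.as_sum_range' _ _ hdeg]
      refine Finset.sum_congr rfl fun m' _ => ?_
      rw [Polynomial.C_mul_X_pow_eq_monomial]
    rw [Finset.sum_congr rfl hinner]
    conv_rhs => rw [← S.bas.linearCombination_repr x]
    rw [Finsupp.linearCombination_apply, Finsupp.sum]
  have hpT : (idx, m) ∈ T := by
    rw [hT, Finset.mem_product]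
    exact ⟨hsupp, Finset.mem_range.2 hmM⟩
  have hd0D : dg (idx, m) ∈ D := Finset.mem_image_of_mem dg hpT
  have hY0 : Y (dg (idx, m)) = 0 :=
    grade_unique hYmem hx hsum hd0D (by simp only [hdg]; exact hne)
  have hterm : ∀ p ∈ T,
      (S.bas.repr ((if dg p = dg (idx, m) then (Polynomial.C ((c p.1).coeff p.2) * X ^ p.2) else 0)
          • S.bas p.1)) idx
        = if p = (idx, m) then Polynomial.C ((c idx).coeff m) * X ^ m else 0 := by
    intro p hp
    rw [map_smul, Module.Basis.repr_self, Finsupp.smul_apply, Finsupp.single_apply]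
    by_cases h1 : p = (idx, m)
    · subst h1
      simp
    · by_cases h2 : p.1 = idx
      · have hm2 : p.2 ≠ m := by
          intro hcon
          exact h1 (Prod.ext h2 hcon)
        have hdgne : dg p ≠ dg (idx, m) := by
          simp only [hdg]
          rw [h2]
          intro hcon
          apply hm2
          have : ((p.2 : ℚ)) = (m : ℚ) := by linarith
          exact_mod_cast this
        rw [if_neg hdgne, zero_smul, if_neg h1]
      · rw [if_neg h2, smul_zero, if_neg h1]
  have hrep : (S.bas.repr (Y (dg (idx, m)))) idx = Polynomial.C ((c idx).coeff m) * X ^ m := by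
    conv_lhs => rw [hY]
    rw [map_sum, Finsupp.finset_sum_apply, Finset.sum_congr rfl hterm,
      Finset.sum_ite_eq' T (idx, m), if_pos hpT]
  rw [hY0, map_zero] at hrep
  have hfin := congrArg (fun pp : F2U => pp.coeff m) hrep.symm
  simpa [Polynomial.coeff_C_mul, Polynomial.coeff_X_pow] using hfin

end StdData
/-- `U`-exponent bringing degree `u` down to `g`. -/
def ex (u g : ℚ) : ℕ := (⌊(u - g) / 2⌋).toNat

lemma toN_toNat {q : ℚ} {m : ℕ} (h : toN q = some m) : (⌊q⌋).toNat = m := by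
  rw [toN_eq_some] at h
  rw [← h]
  simp

namespace StdData

variable {Bc : IotaCx} {N : ℕ} {L Ad : ℕ → ℚ} (S : StdData Bc N L Ad)

lemma x_expand (x : Bc.C) :
    x = ∑ j ∈ Finset.range N, S.cV x j • S.v j
      + ∑ l ∈ Finset.range (N - 1), S.cA x l • S.a l := by
  apply S.bas.repr.injective
  ext idx
  rw [map_add, map_sum, map_sum, Finsupp.add_apply, Finsupp.finset_sum_apply,
    Finsupp.finset_sum_apply]
  rcases idx with ⟨j0, hj0⟩ | ⟨l0, hl0⟩
  · have h1 : ∀ j ∈ Finset.range N, (S.bas.repr (S.cV x j • S.v j)) (Sum.inl ⟨j0, hj0⟩)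
        = if j = j0 then S.bas.repr x (Sum.inl ⟨j0, hj0⟩) else 0 := by
      intro j hj
      have hjN := Finset.mem_range.1 hj
      rw [show S.v j = S.bas (Sum.inl ⟨j, hjN⟩) from by rw [bas, Module.Basis.mk_apply]; rfl,
        map_smul, Module.Basis.repr_self, Finsupp.smul_apply, Finsupp.single_apply]
      by_cases he : j = j0
      · subst he
        rw [if_pos rfl, if_pos rfl, smul_eq_mul, mul_one]
        rw [cV, dif_pos hjN]
      · rw [if_neg he, if_neg, smul_zero]
        intro hc
        injection hc with hc'
        exact he (congrArg Subtype.val hc')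
    have h2 : ∀ l ∈ Finset.range (N - 1),
        (S.bas.repr (S.cA x l • S.a l)) (Sum.inl ⟨j0, hj0⟩) = 0 := by
      intro l hl
      have hlN := Finset.mem_range.1 hl
      rw [show S.a l = S.bas (Sum.inr ⟨l, by omega⟩) from by rw [bas, Module.Basis.mk_apply]; rfl,
        map_smul, Module.Basis.repr_self, Finsupp.smul_apply, Finsupp.single_apply, if_neg, smul_zero]
      intro hc
      cases hc
    rw [Finset.sum_congr rfl h1, Finset.sum_ite_eq' (Finset.range N) j0,
      if_pos (Finset.mem_range.2 hj0), Finset.sum_eq_zero h2, add_zero]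
  · have h1 : ∀ j ∈ Finset.range N,
        (S.bas.repr (S.cV x j • S.v j)) (Sum.inr ⟨l0, hl0⟩) = 0 := by
      intro j hj
      have hjN := Finset.mem_range.1 hj
      rw [show S.v j = S.bas (Sum.inl ⟨j, hjN⟩) from by rw [bas, Module.Basis.mk_apply]; rfl,
        map_smul, Module.Basis.repr_self, Finsupp.smul_apply, Finsupp.single_apply, if_neg, smul_zero]
      intro hc
      cases hc
    have h2 : ∀ l ∈ Finset.range (N - 1), (S.bas.repr (S.cA x l • S.a l)) (Sum.inr ⟨l0, hl0⟩)
        = if l = l0 then S.bas.repr x (Sum.inr ⟨l0, hl0⟩) else 0 := by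
      intro l hl
      have hlN := Finset.mem_range.1 hl
      rw [show S.a l = S.bas (Sum.inr ⟨l, by omega⟩) from by rw [bas, Module.Basis.mk_apply]; rfl,
        map_smul, Module.Basis.repr_self, Finsupp.smul_apply, Finsupp.single_apply]
      by_cases he : l = l0
      · subst he
        rw [if_pos rfl, if_pos rfl, smul_eq_mul, mul_one]
        rw [cA, dif_pos (by omega)]
      · rw [if_neg he, if_neg, smul_zero]
        intro hc
        injection hc with hc'
        exact he (congrArg Subtype.val hc')
    rw [Finset.sum_congr rfl h2, Finset.sum_ite_eq' (Finset.range (N - 1)) l0,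
      if_pos (Finset.mem_range.2 (by omega)), Finset.sum_eq_zero h1, zero_add]

lemma cV_da {l : ℕ} (hl : l + 1 < N) (j : ℕ) :
    S.cV (Bc.d (S.a l)) j
      = (if j = l then (X : F2U) ^ (al L Ad l) else 0)
        + (if j = l + 1 then (X : F2U) ^ (be L Ad l) else 0) := by
  rw [S.da' hl, cV_add, cV_smul, cV_smul, cV_v S (by omega), cV_v S (by omega)]
  rw [mul_ite, mul_ite, mul_one, mul_zero, mul_one, mul_zero]

lemma cycle_cA {x : Bc.C} (hd : Bc.d x = 0) (l : ℕ) : S.cA x l = 0 := by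
  have hsum0 : ∑ l ∈ Finset.range (N - 1), S.cA x l • Bc.d (S.a l) = 0 := by
    have hEXP := S.x_expand x
    have hdx : Bc.d x = ∑ l ∈ Finset.range (N - 1), S.cA x l • Bc.d (S.a l) := by
      conv_lhs => rw [hEXP]
      rw [map_add, map_sum, map_sum]
      have hv : ∀ j ∈ Finset.range N, Bc.d (S.cV x j • S.v j) = 0 := by
        intro j hj
        rw [LinearMap.map_smul, S.dv j (Finset.mem_range.1 hj), smul_zero]
      rw [Finset.sum_eq_zero hv, zero_add]
      refine Finset.sum_congr rfl fun l _ => ?_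
      rw [LinearMap.map_smul]
    rw [← hdx, hd]
  by_cases hlN : l + 1 < N
  swap
  · rw [cA, dif_neg hlN]
  have key : ∀ j, j < N - 1 → S.cA x j = 0 := by
    intro j
    induction j using Nat.strong_induction_on with
    | _ j ih =>
      intro hjN
      have h1 : S.cV (∑ l ∈ Finset.range (N - 1), S.cA x l • Bc.d (S.a l)) j = 0 := by
        rw [hsum0, cV_zero]
      rw [cV_sum] at h1
      have h2 : ∀ l ∈ Finset.range (N - 1),
          S.cV (S.cA x l • Bc.d (S.a l)) j
            = (if j = l then S.cA x l * (X : F2U) ^ (al L Ad l) else 0)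
              + (if j = l + 1 then S.cA x l * (X : F2U) ^ (be L Ad l) else 0) := by
        intro l hl
        have hlN' := Finset.mem_range.1 hl
        rw [cV_smul, S.cV_da (by omega), mul_add, mul_ite, mul_ite, mul_zero]
      rw [Finset.sum_congr rfl h2, Finset.sum_add_distrib] at h1
      have h3 : (∑ l ∈ Finset.range (N - 1),
          if j = l then S.cA x l * (X : F2U) ^ (al L Ad l) else 0)
            = S.cA x j * (X : F2U) ^ (al L Ad j) := by
        rw [Finset.sum_ite_eq (Finset.range (N - 1)) j, if_pos (Finset.mem_range.2 hjN)]
      have h4 : (∑ l ∈ Finset.range (N - 1),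
          if j = l + 1 then S.cA x l * (X : F2U) ^ (be L Ad l) else 0) = 0 := by
        rcases j with _ | jj
        · refine Finset.sum_eq_zero fun l _ => ?_
          rw [if_neg (by omega)]
        · have hc : ∀ l ∈ Finset.range (N - 1),
              (if jj + 1 = l + 1 then S.cA x l * (X : F2U) ^ (be L Ad l) else 0)
                = if jj = l then S.cA x l * (X : F2U) ^ (be L Ad l) else 0 := by
            intro l _
            refine if_congr ?_ rfl rfl
            omega
          rw [Finset.sum_congr rfl hc, Finset.sum_ite_eq (Finset.range (N - 1)) jj]
          split
          · rename_i hjj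
            rw [ih jj (by omega) (Finset.mem_range.1 hjj), zero_mul]
          · rfl
      rw [h3, h4, add_zero] at h1
      rcases mul_eq_zero.1 h1 with hz | hz
      · exact hz
      · exact absurd hz (pow_ne_zero _ Polynomial.X_ne_zero)
  exact key l (by omega)

lemma cV_grade_none {x : Bc.C} {g : ℚ} (hx : x ∈ Bc.gr g) {j : ℕ} (hj : j < N)
    (hnone : toN ((L j - g) / 2) = none) : S.cV x j = 0 := by
  ext m
  rw [cV, dif_pos hj]
  refine S.coeff_grade hx (Sum.inl ⟨j, hj⟩) m ?_ |>.trans (Polynomial.coeff_zero m).symm ▸ ?_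
  · intro hc
    refine toN_none.1 hnone ⟨m, ?_⟩
    have : degIdx L Ad (Sum.inl (⟨j, hj⟩ : {i : ℕ // i < N})) = L j := rfl
    rw [this] at hc
    push_cast
    linarith
  · simp

lemma cV_grade_mono {x : Bc.C} {g : ℚ} (hx : x ∈ Bc.gr g) {j : ℕ} (hj : j < N) :
    S.cV x j = Polynomial.C ((S.cV x j).coeff (ex (L j) g)) * X ^ (ex (L j) g) := by
  rcases hN : toN ((L j - g) / 2) with _ | k0
  · rw [S.cV_grade_none hx hj hN]
    simp
  · have hk0 : ex (L j) g = k0 := toN_toNat hN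
    have hval := toN_eq_some.1 hN
    rw [hk0]
    ext m
    rw [Polynomial.C_mul_X_pow_eq_monomial, Polynomial.coeff_monomial]
    by_cases he : m = k0
    · subst he
      rw [if_pos rfl]
    · rw [if_neg (fun hc => he hc.symm)]
      rw [cV, dif_pos hj]
      refine S.coeff_grade hx (Sum.inl ⟨j, hj⟩) m ?_
      have hd : degIdx L Ad (Sum.inl (⟨j, hj⟩ : {i : ℕ // i < N})) = L j := rfl
      rw [hd]
      intro hc
      apply he
      have : ((m : ℚ)) = k0 := by linarith
      exact_mod_cast this

/-- A graded cycle is an explicit monomial combination of the `v`'s. -/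
lemma cycle_expand {x : Bc.C} {g : ℚ} (hd : Bc.d x = 0) (hx : x ∈ Bc.gr g) :
    x = ∑ j ∈ Finset.range N,
      (Polynomial.C ((S.cV x j).coeff (ex (L j) g)) * X ^ (ex (L j) g)) • S.v j := by
  conv_lhs => rw [S.x_expand x]
  have h2 : ∀ l ∈ Finset.range (N - 1), S.cA x l • S.a l = 0 := by
    intro l _
    rw [S.cycle_cA hd, zero_smul]
  rw [Finset.sum_eq_zero h2, add_zero]
  refine Finset.sum_congr rfl fun j hj => ?_
  rw [← S.cV_grade_mono hx (Finset.mem_range.1 hj)]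

end StdData
lemma char2_smul_even {Mo : Type} [AddCommGroup Mo] [Module F2U Mo] (y : Mo) {n : ℕ}
    (hn : 2 ∣ n) : n • y = 0 := by
  obtain ⟨t, rfl⟩ := hn
  have h2 : ∀ z : Mo, (2 : ℕ) • z = 0 := by
    intro z
    rw [two_nsmul]
    have h1 : z + z = ((1 : F2U) + 1) • z := by rw [add_smul, one_smul]
    rw [h1]
    have h0 : ((1 : F2U) + 1) = 0 := by
      rw [← Polynomial.C_1, ← Polynomial.C_add]
      norm_num
      decide
    rw [h0, zero_smul]
  rw [mul_comm, mul_nsmul, h2]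

lemma nat_of_int_nonneg {q : ℚ} (hz : ∃ z : ℤ, (z : ℚ) = q) (hq : 0 ≤ q) :
    ∃ s : ℕ, (s : ℚ) = q := by
  obtain ⟨z, rfl⟩ := hz
  have : 0 ≤ z := by exact_mod_cast hq
  exact ⟨z.toNat, by exact_mod_cast congrArg (Int.cast : ℤ → ℚ) (Int.toNat_of_nonneg this)⟩

lemma le_of_ceil_toNat_le {q : ℚ} {p : ℕ} (h : (⌈q⌉).toNat ≤ p) : q ≤ p := by
  calc q ≤ (⌈q⌉ : ℚ) := Int.le_ceil q
    _ ≤ ((⌈q⌉.toNat : ℤ) : ℚ) := by exact_mod_cast Int.self_le_toNat _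
    _ ≤ p := by exact_mod_cast h

section Extract

variable {M M' : MonotoneRoot} {A B : IotaCx}

/-- the matrix of a local map in the `v`-bases. -/
def epsOf (SA : StdData A (2*M.m) M.lDeg M.aDeg) (SB : StdData B (2*M'.m) M'.lDeg M'.aDeg)
    (F : A.C →ₗ[F2U] B.C) (i j : ℕ) : F2 :=
  (SB.cV (F (SA.v i)) j).coeff (ex (M'.lDeg j) (M.lDeg i))

variable (SA : StdData A (2*M.m) M.lDeg M.aDeg) (SB : StdData B (2*M'.m) M'.lDeg M'.aDeg)
  (F : A.C →ₗ[F2U] B.C)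

lemma w_cycle (hF : isLocalMap A B F) {i : ℕ} (hi : i < 2*M.m) :
    B.d (F (SA.v i)) = 0 := by
  have h1 := congrArg (fun G : A.C →ₗ[F2U] B.C => G (SA.v i)) hF.1
  simp only [LinearMap.comp_apply] at h1
  rw [SA.dv i hi, map_zero] at h1
  exact h1.symm

lemma w_grade (hF : isLocalMap A B F) {i : ℕ} (hi : i < 2*M.m) :
    F (SA.v i) ∈ B.gr (M.lDeg i) :=
  hF.2.1 _ _ (SA.gv i hi)

lemma eps_none {i j : ℕ} (hF : isLocalMap A B F) (hi : i < 2*M.m) (hj : j < 2*M'.m)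
    (hnone : toN ((M'.lDeg j - M.lDeg i) / 2) = none) :
    SB.cV (F (SA.v i)) j = 0 :=
  SB.cV_grade_none (w_grade SA F hF hi) hj hnone

lemma eps_mono (hF : isLocalMap A B F) {i j : ℕ} (hi : i < 2*M.m) (hj : j < 2*M'.m) :
    SB.cV (F (SA.v i)) j = Polynomial.C (epsOf SA SB F i j) * X ^ (ex (M'.lDeg j) (M.lDeg i)) :=
  SB.cV_grade_mono (w_grade SA F hF hi) hj

lemma eps_expand (hF : isLocalMap A B F) {i : ℕ} (hi : i < 2*M.m) :
    F (SA.v i) = ∑ j ∈ Finset.range (2*M'.m),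
      (Polynomial.C (epsOf SA SB F i j) * X ^ (ex (M'.lDeg j) (M.lDeg i))) • SB.v j :=
  SB.cycle_expand (w_cycle SA F hF hi) (w_grade SA F hF hi)

lemma eps_bound (hF : isLocalMap A B F) {i j : ℕ} (hi : i < 2*M.m)
    (hne : epsOf SA SB F i j ≠ 0) : j < 2*M'.m ∧ M.lDeg i ≤ M'.lDeg j := by
  by_cases hj : j < 2*M'.m
  swap
  · exfalso
    apply hne
    rw [epsOf, StdData.cV, dif_neg hj]
    simp
  refine ⟨hj, ?_⟩
  rcases hN : toN ((M'.lDeg j - M.lDeg i) / 2) with _ | k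
  · exact absurd (by rw [epsOf, eps_none SA SB F hF hi hj hN]; simp) hne
  · have := toN_eq_some.1 hN
    have hk : (0 : ℚ) ≤ (k : ℚ) := by positivity
    linarith

end Extract
section Extract2

variable {M M' : MonotoneRoot} {A B : IotaCx}
variable (SA : StdData A (2*M.m) M.lDeg M.aDeg) (SB : StdData B (2*M'.m) M'.lDeg M'.aDeg)
  (F : A.C →ₗ[F2U] B.C)

lemma theta_pow_w (hF : isLocalMap A B F) {i : ℕ} (hi : i < 2*M.m) (p : ℕ) (Sf : Finset ℕ) :
    SB.theta Sf (M.lDeg i - 2*p) ((X : F2U)^p • F (SA.v i)) = ∑ j ∈ Sf, epsOf SA SB F i j := by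
  rw [StdData.theta]
  refine Finset.sum_congr rfl fun j hj => ?_
  rw [SB.cV_smul]
  by_cases hjN : j < 2*M'.m
  swap
  · have hc : SB.cV (F (SA.v i)) j = 0 := by rw [StdData.cV, dif_neg hjN]
    have he : epsOf SA SB F i j = 0 := by rw [epsOf, StdData.cV, dif_neg hjN]; simp
    rw [hc, mul_zero, he]
    rcases toN ((M'.lDeg j - (M.lDeg i - 2*p))/2) with _ | mm <;> simp
  rcases hN : toN ((M'.lDeg j - M.lDeg i) / 2) with _ | k
  · have hc := eps_none SA SB F hF hi hjN hN
    have he : epsOf SA SB F i j = 0 := by rw [epsOf, hc]; simp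
    rw [hc, mul_zero, he]
    rcases toN ((M'.lDeg j - (M.lDeg i - 2*p))/2) with _ | mm <;> simp
  · have hsh : (M'.lDeg j - (M.lDeg i - 2*p))/2 = (M'.lDeg j - M.lDeg i)/2 + p := by ring
    rw [hsh, toN_add_nat hN p]
    simp only [Option.elim]
    rw [eps_mono SA SB F hF hi hjN, show ex (M'.lDeg j) (M.lDeg i) = k from toN_toNat hN,
      mul_comm, Polynomial.coeff_mul_X_pow,
      Polynomial.C_mul_X_pow_eq_monomial, Polynomial.coeff_monomial, if_pos rfl]

lemma theta_iota_w (hF : isLocalMap A B F) {i : ℕ} (hi : i < 2*M.m) (Sf : Finset ℕ)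
    (hSf : Sf ⊆ Finset.range (2*M'.m)) :
    SB.theta Sf (M.lDeg i) (B.iota (F (SA.v i)))
      = ∑ j ∈ Sf, epsOf SA SB F i (2*M'.m - 1 - j) := by
  have hm' := M'.hm
  have hiw : B.iota (F (SA.v i)) = ∑ j ∈ Finset.range (2*M'.m),
      (Polynomial.C (epsOf SA SB F i (2*M'.m - 1 - j))
        * X ^ (ex (M'.lDeg (2*M'.m - 1 - j)) (M.lDeg i))) • SB.v j := by
    conv_lhs => rw [eps_expand SA SB F hF hi]
    rw [map_sum]
    rw [← Finset.sum_range_reflect]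
    refine Finset.sum_congr rfl fun j hj => ?_
    have hjN := Finset.mem_range.1 hj
    rw [LinearMap.map_smul, SB.iv (2*M'.m - 1 - j) (by omega)]
    have h1 : 2*M'.m - 1 - (2*M'.m - 1 - j) = j := by omega
    rw [h1]
  rw [hiw, SB.theta_sum]
  have hterm : ∀ j ∈ Finset.range (2*M'.m),
      SB.theta Sf (M.lDeg i)
        ((Polynomial.C (epsOf SA SB F i (2*M'.m - 1 - j))
          * X ^ (ex (M'.lDeg (2*M'.m - 1 - j)) (M.lDeg i))) • SB.v j)
        = if j ∈ Sf then epsOf SA SB F i (2*M'.m - 1 - j) else 0 := by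
    intro j hj
    have hjN := Finset.mem_range.1 hj
    rw [SB.theta_smul_v _ _ _ hjN]
    have hsymm : M'.lDeg (2*M'.m - 1 - j) = M'.lDeg j := M'.lDeg_symm hjN
    by_cases hin : j ∈ Sf
    swap
    · rw [if_neg hin, if_neg hin]
    rw [if_pos hin, if_pos hin]
    rcases hN : toN ((M'.lDeg j - M.lDeg i) / 2) with _ | k
    · have hN2 : toN ((M'.lDeg (2*M'.m - 1 - j) - M.lDeg i) / 2) = none := by rw [hsymm, hN]
      have he : epsOf SA SB F i (2*M'.m - 1 - j) = 0 := by
        rw [epsOf, eps_none SA SB F hF hi (by omega) hN2]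
        simp
      simp [he]
    · simp only [Option.elim]
      have hk : ex (M'.lDeg (2*M'.m - 1 - j)) (M.lDeg i) = k := by
        rw [hsymm]
        exact toN_toNat hN
      rw [hk, Polynomial.C_mul_X_pow_eq_monomial, Polynomial.coeff_monomial, if_pos rfl]
  rw [Finset.sum_congr rfl hterm, Finset.sum_ite_mem]
  rw [Finset.inter_eq_right.2 hSf]

end Extract2
section Extract3

variable {M M' : MonotoneRoot} {A B : IotaCx}
variable (SA : StdData A (2*M.m) M.lDeg M.aDeg) (SB : StdData B (2*M'.m) M'.lDeg M'.aDeg)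
  (F : A.C →ₗ[F2U] B.C)

lemma eps_row_sum (hF : isLocalMap A B F) {i : ℕ} (hi : i < 2*M.m) :
    ∑ j ∈ Finset.range (2*M'.m), epsOf SA SB F i j = 1 := by
  classical
  have hm' := M'.hm
  have hbin : ∀ e : F2, e = 0 ∨ e = 1 := fun e => by fin_cases e <;> [exact Or.inl rfl; exact Or.inr rfl]
  by_contra hs
  have hsum0 : ∑ j ∈ Finset.range (2*M'.m), epsOf SA SB F i j = 0 := by
    rcases hbin (∑ j ∈ Finset.range (2*M'.m), epsOf SA SB F i j) with h | h
    · exact h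
    · exact absurd h hs
  set T := (Finset.range (2*M'.m)).filter (fun j => epsOf SA SB F i j = 1) with hT
  have hTsub : T ⊆ Finset.range (2*M'.m) := Finset.filter_subset _ _
  have hcard : ((T.card : ℕ) : F2) = 0 := by
    rw [← hsum0]
    rw [Finset.card_eq_sum_ones T, Nat.cast_sum]
    rw [hT, Finset.sum_filter]
    refine (Finset.sum_congr rfl fun j _ => ?_).symm
    rcases hbin (epsOf SA SB F i j) with h | h <;> rw [h] <;> simp
  have heven : 2 ∣ T.card := (ZMod.natCast_eq_zero_iff _ _).1 hcard
  rcases Finset.eq_empty_or_nonempty T with hTe | ⟨j0, hj0⟩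
  · have hw0 : F (SA.v i) = 0 := by
      rw [eps_expand SA SB F hF hi]
      refine Finset.sum_eq_zero fun j hj => ?_
      have he0 : epsOf SA SB F i j = 0 := by
        rcases hbin (epsOf SA SB F i j) with h | h
        · exact h
        · exfalso
          have : j ∈ T := by rw [hT, Finset.mem_filter]; exact ⟨hj, h⟩
          rw [hTe] at this
          exact absurd this (Finset.notMem_empty j)
      rw [he0]
      simp
    obtain ⟨n, hn⟩ := hF.2.2.2.1 (SA.v i) (SA.dv i hi)
      (by rw [hw0]; exact ⟨0, map_zero _⟩)
    exact SA.pow_smul_v_not_bdry hi n hn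
  · have hj0T := hj0
    rw [hT, Finset.mem_filter, Finset.mem_range] at hj0T
    obtain ⟨hj0N, hj0e⟩ := hj0T
    have hanch : ∃ k0 : ℕ, (k0 : ℚ) = (M'.lDeg j0 - M.lDeg i) / 2 := by
      rcases hN : toN ((M'.lDeg j0 - M.lDeg i) / 2) with _ | k0
      · exfalso
        have := eps_none SA SB F hF hi hj0N hN
        rw [epsOf, this] at hj0e
        simp at hj0e
      · exact ⟨k0, toN_eq_some.1 hN⟩
    obtain ⟨k0, hk0⟩ := hanch
    set p := (Finset.range (2*M'.m - 1)).sup (fun l => (⌈(M.lDeg i - M'.aDeg l)/2⌉).toNat) with hp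
    set G := M.lDeg i - 2*p with hG
    have hang : ∀ l, l + 1 < 2*M'.m → ∃ s : ℕ, (s : ℚ) = (M'.aDeg l - G) / 2 := by
      intro l hl
      refine nat_of_int_nonneg ?_ ?_
      · obtain ⟨z, hz⟩ := M'.parity_la (i := j0) (l := l) hj0N (by omega)
        refine ⟨(k0 : ℤ) - z + p, ?_⟩
        rw [hG]
        push_cast
        linarith
      · have hle := Finset.le_sup (f := fun l => (⌈(M.lDeg i - M'.aDeg l)/2⌉).toNat)
          (Finset.mem_range.2 (by omega : l < 2*M'.m - 1))
        have h2 := le_of_ceil_toNat_le (le_trans hle (le_refl p))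
        rw [hG]
        linarith
    have htel : ∀ j, j < 2*M'.m →
        (X:F2U)^(ex (M'.lDeg j) G) • SB.v j + (X:F2U)^(ex (M'.lDeg 0) G) • SB.v 0
          ∈ LinearMap.range B.d := by
      intro j
      induction j with
      | zero =>
          intro _
          rw [← two_nsmul, char2_smul_even _ (dvd_refl 2)]
          exact Submodule.zero_mem _
      | succ j ih =>
          intro hj1
          have hjN : j < 2*M'.m := by omega
          have hIH := ih hjN
          obtain ⟨s, hs⟩ := hang j (by omega)
          have hal := SB.al_spec (by omega : j + 1 < 2*M'.m)
          have hbe := SB.be_spec (by omega : j + 1 < 2*M'.m)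
          have he1 : ex (M'.lDeg j) G = s + al M'.lDeg M'.aDeg j := by
            rw [ex]
            refine toN_toNat (toN_eq_some.2 ?_)
            push_cast
            linarith
          have he2 : ex (M'.lDeg (j+1)) G = s + be M'.lDeg M'.aDeg j := by
            rw [ex]
            refine toN_toNat (toN_eq_some.2 ?_)
            push_cast
            linarith
          have hpair : (X:F2U)^(ex (M'.lDeg j) G) • SB.v j
              + (X:F2U)^(ex (M'.lDeg (j+1)) G) • SB.v (j+1)
              = (X:F2U)^s • B.d (SB.a j) := by
            rw [SB.da' (by omega), smul_add, smul_smul, smul_smul, ← pow_add, ← pow_add,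
              he1, he2]
          have hmem : (X:F2U)^(ex (M'.lDeg j) G) • SB.v j
              + (X:F2U)^(ex (M'.lDeg (j+1)) G) • SB.v (j+1) ∈ LinearMap.range B.d := by
            rw [hpair]
            exact ⟨(X:F2U)^s • SB.a j, by rw [map_smul]⟩
          have hcomb : (X:F2U)^(ex (M'.lDeg (j+1)) G) • SB.v (j+1)
              + (X:F2U)^(ex (M'.lDeg 0) G) • SB.v 0
              = ((X:F2U)^(ex (M'.lDeg j) G) • SB.v j
                  + (X:F2U)^(ex (M'.lDeg (j+1)) G) • SB.v (j+1))
                + ((X:F2U)^(ex (M'.lDeg j) G) • SB.v j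
                  + (X:F2U)^(ex (M'.lDeg 0) G) • SB.v 0) := by
            have ha : (X:F2U)^(ex (M'.lDeg j) G) • SB.v j
                + (X:F2U)^(ex (M'.lDeg j) G) • SB.v j = 0 := by
              rw [← two_nsmul, char2_smul_even _ (dvd_refl 2)]
            rw [show ((X:F2U)^(ex (M'.lDeg j) G) • SB.v j
                  + (X:F2U)^(ex (M'.lDeg (j+1)) G) • SB.v (j+1))
                + ((X:F2U)^(ex (M'.lDeg j) G) • SB.v j
                  + (X:F2U)^(ex (M'.lDeg 0) G) • SB.v 0)
              = ((X:F2U)^(ex (M'.lDeg j) G) • SB.v j + (X:F2U)^(ex (M'.lDeg j) G) • SB.v j)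
                + ((X:F2U)^(ex (M'.lDeg (j+1)) G) • SB.v (j+1)
                  + (X:F2U)^(ex (M'.lDeg 0) G) • SB.v 0) from by abel, ha, zero_add]
          rw [hcomb]
          exact Submodule.add_mem _ hmem hIH
    have hXw : (X:F2U)^p • F (SA.v i) = ∑ j ∈ T, (X:F2U)^(ex (M'.lDeg j) G) • SB.v j := by
      conv_lhs => rw [eps_expand SA SB F hF hi]
      rw [Finset.smul_sum]
      rw [← Finset.sum_filter_add_sum_filter_not (Finset.range (2*M'.m))
        (fun j => epsOf SA SB F i j = 1)]
      have hz2 : ∑ j ∈ (Finset.range (2*M'.m)).filter (fun j => ¬ epsOf SA SB F i j = 1),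
          (X:F2U)^p • ((Polynomial.C (epsOf SA SB F i j)
            * X ^ (ex (M'.lDeg j) (M.lDeg i))) • SB.v j) = 0 := by
        refine Finset.sum_eq_zero fun j hj => ?_
        rw [Finset.mem_filter] at hj
        have he0 : epsOf SA SB F i j = 0 := by
          rcases hbin (epsOf SA SB F i j) with h | h
          · exact h
          · exact absurd h hj.2
        rw [he0]
        simp
      rw [hz2, add_zero]
      refine Finset.sum_congr rfl fun j hj => ?_
      rw [hT, Finset.mem_filter, Finset.mem_range] at hj
      obtain ⟨hjN, hje⟩ := hj
      rw [hje, Polynomial.C_1, one_mul, smul_smul, ← pow_add]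
      have hksome : ∃ k : ℕ, toN ((M'.lDeg j - M.lDeg i)/2) = some k := by
        rcases hN : toN ((M'.lDeg j - M.lDeg i) / 2) with _ | k
        · exfalso
          have := eps_none SA SB F hF hi hjN hN
          rw [epsOf, this] at hje
          simp at hje
        · exact ⟨k, rfl⟩
      obtain ⟨k, hk⟩ := hksome
      have hk' := toN_eq_some.1 hk
      have hex1 : ex (M'.lDeg j) (M.lDeg i) = k := toN_toNat hk
      have hex2 : ex (M'.lDeg j) G = k + p := by
        rw [ex]
        refine toN_toNat (toN_eq_some.2 ?_)
        rw [hG]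
        push_cast
        linarith
      have hexp : p + ex (M'.lDeg j) (M.lDeg i) = ex (M'.lDeg j) G := by
        rw [hex1, hex2]
        omega
      rw [hexp]
    have hbd : (X:F2U)^p • F (SA.v i) ∈ LinearMap.range B.d := by
      rw [hXw]
      have hrw : ∑ j ∈ T, (X:F2U)^(ex (M'.lDeg j) G) • SB.v j
          = (∑ j ∈ T, ((X:F2U)^(ex (M'.lDeg j) G) • SB.v j
              + (X:F2U)^(ex (M'.lDeg 0) G) • SB.v 0))
            + T.card • ((X:F2U)^(ex (M'.lDeg 0) G) • SB.v 0) := by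
        rw [Finset.sum_add_distrib, Finset.sum_const]
        have h0 : T.card • ((X:F2U)^(ex (M'.lDeg 0) G) • SB.v 0)
            + T.card • ((X:F2U)^(ex (M'.lDeg 0) G) • SB.v 0) = 0 := by
          rw [← add_nsmul]
          exact char2_smul_even _ ⟨T.card, by ring⟩
        rw [add_assoc, h0, add_zero]
      rw [hrw]
      refine Submodule.add_mem _ (Submodule.sum_mem _ fun j hj => ?_) ?_
      · exact htel j (Finset.mem_range.1 (hTsub hj))
      · rw [char2_smul_even _ heven]
        exact Submodule.zero_mem _
    have hdz : A.d ((X:F2U)^p • SA.v i) = 0 := by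
      rw [map_smul, SA.dv i hi, smul_zero]
    have hFz : F ((X:F2U)^p • SA.v i) ∈ LinearMap.range B.d := by
      rw [map_smul]
      exact hbd
    obtain ⟨n, hn⟩ := hF.2.2.2.1 _ hdz hFz
    rw [smul_smul, ← pow_add] at hn
    exact SA.pow_smul_v_not_bdry hi (n + p) hn

end Extract3
lemma f2_cancel : ∀ {a b : F2}, a + b = 0 → a = b := by decide

section Extract4

variable {M M' : MonotoneRoot} {A B : IotaCx}
variable (SA : StdData A (2*M.m) M.lDeg M.aDeg) (SB : StdData B (2*M'.m) M'.lDeg M'.aDeg)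
  (F : A.C →ₗ[F2U] B.C)

lemma toN_isSome_level {g u : ℚ} (hsome : (toN ((u - g) / 2)).isSome) : g ≤ u := by
  obtain ⟨s, hs⟩ := toN_isSome.1 hsome
  have : (0 : ℚ) ≤ (s : ℚ) := by positivity
  linarith

lemma eps_chain (hF : isLocalMap A B F) {i : ℕ} (hi : i + 1 < 2*M.m) (Sf : Finset ℕ)
    (hcl : ∀ l, l + 1 < 2*M'.m → M.aDeg i ≤ M'.aDeg l → (l ∈ Sf ↔ l + 1 ∈ Sf)) :
    ∑ j ∈ Sf, epsOf SA SB F i j = ∑ j ∈ Sf, epsOf SA SB F (i+1) j := by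
  have hm := M.hm
  have hbd : (X:F2U)^(al M.lDeg M.aDeg i) • F (SA.v i)
      + (X:F2U)^(be M.lDeg M.aDeg i) • F (SA.v (i+1)) ∈ LinearMap.range B.d := by
    have h1 := congrArg (fun G : A.C →ₗ[F2U] B.C => G (SA.a i)) hF.1
    simp only [LinearMap.comp_apply] at h1
    have h2 : F (A.d (SA.a i)) = (X:F2U)^(al M.lDeg M.aDeg i) • F (SA.v i)
        + (X:F2U)^(be M.lDeg M.aDeg i) • F (SA.v (i+1)) := by
      rw [SA.da' hi, map_add, map_smul, map_smul]
    exact ⟨F (SA.a i), by rw [← h1, h2]⟩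
  have hthz := SB.theta_boundary Sf (M.aDeg i)
    (fun l hl hsome => hcl l hl (toN_isSome_level hsome)) hbd
  rw [StdData.theta_add] at hthz
  have hv1 : SB.theta Sf (M.aDeg i) ((X:F2U)^(al M.lDeg M.aDeg i) • F (SA.v i))
      = ∑ j ∈ Sf, epsOf SA SB F i j := by
    have hth := theta_pow_w SA SB F hF (i := i) (by omega) (al M.lDeg M.aDeg i) Sf
    have hlev : M.lDeg i - 2*((al M.lDeg M.aDeg i : ℕ) : ℚ) = M.aDeg i := by
      have := SA.al_spec hi
      linarith
    rwa [hlev] at hth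
  have hv2 : SB.theta Sf (M.aDeg i) ((X:F2U)^(be M.lDeg M.aDeg i) • F (SA.v (i+1)))
      = ∑ j ∈ Sf, epsOf SA SB F (i+1) j := by
    have hth := theta_pow_w SA SB F hF (i := i+1) (by omega) (be M.lDeg M.aDeg i) Sf
    have hlev : M.lDeg (i+1) - 2*((be M.lDeg M.aDeg i : ℕ) : ℚ) = M.aDeg i := by
      have := SA.be_spec hi
      linarith
    rwa [hlev] at hth
  rw [hv1, hv2] at hthz
  exact f2_cancel hthz

lemma eps_iota (hF : isLocalMap A B F) {i : ℕ} (hi : i < 2*M.m) (Sf : Finset ℕ)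
    (hSf : Sf ⊆ Finset.range (2*M'.m))
    (hcl : ∀ l, l + 1 < 2*M'.m → M.lDeg i ≤ M'.aDeg l → (l ∈ Sf ↔ l + 1 ∈ Sf)) :
    ∑ j ∈ Sf, epsOf SA SB F (2*M.m - 1 - i) j
      = ∑ j ∈ Sf, epsOf SA SB F i (2*M'.m - 1 - j) := by
  have hm := M.hm
  obtain ⟨H, hH⟩ := hF.2.2.1
  have h1 := congrArg (fun G : A.C →ₗ[F2U] B.C => G (SA.v i)) hH
  simp only [LinearMap.add_apply, LinearMap.comp_apply] at h1
  rw [SA.iv i hi, SA.dv i hi, map_zero, add_zero] at h1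
  have hbd : F (SA.v (2*M.m - 1 - i)) + B.iota (F (SA.v i)) ∈ LinearMap.range B.d :=
    ⟨H (SA.v i), h1.symm⟩
  have hthz := SB.theta_boundary Sf (M.lDeg i)
    (fun l hl hsome => hcl l hl (toN_isSome_level hsome)) hbd
  rw [StdData.theta_add] at hthz
  have hv1 : SB.theta Sf (M.lDeg i) (F (SA.v (2*M.m - 1 - i)))
      = ∑ j ∈ Sf, epsOf SA SB F (2*M.m - 1 - i) j := by
    have hth := theta_pow_w SA SB F hF (i := 2*M.m - 1 - i) (by omega) 0 Sf
    rw [pow_zero, one_smul] at hth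
    have hlev : M.lDeg (2*M.m - 1 - i) - 2*((0:ℕ):ℚ) = M.lDeg i := by
      rw [M.lDeg_symm hi]
      push_cast
      ring
    rwa [hlev] at hth
  have hv2 := theta_iota_w SA SB F hF hi Sf hSf
  rw [hv1, hv2] at hthz
  exact f2_cancel hthz

end Extract4
/-- The hypotheses extracted from a local map. -/
def GoodEps (M M' : MonotoneRoot) (e : ℕ → ℕ → F2) : Prop :=
  (∀ i j, i < 2*M.m → e i j ≠ 0 → j < 2*M'.m ∧ M.lDeg i ≤ M'.lDeg j) ∧
  (∀ i, i < 2*M.m → ∑ j ∈ Finset.range (2*M'.m), e i j = 1) ∧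
  (∀ i, i + 1 < 2*M.m → ∀ Sf : Finset ℕ,
    (∀ l, l + 1 < 2*M'.m → M.aDeg i ≤ M'.aDeg l → (l ∈ Sf ↔ l + 1 ∈ Sf)) →
    ∑ j ∈ Sf, e i j = ∑ j ∈ Sf, e (i+1) j) ∧
  (∀ i, i < 2*M.m → ∀ Sf : Finset ℕ, Sf ⊆ Finset.range (2*M'.m) →
    (∀ l, l + 1 < 2*M'.m → M.lDeg i ≤ M'.aDeg l → (l ∈ Sf ↔ l + 1 ∈ Sf)) →
    ∑ j ∈ Sf, e (2*M.m - 1 - i) j = ∑ j ∈ Sf, e i (2*M'.m - 1 - j))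

/-- number of angles of `M'` of degree `< g`. -/
def tcount (M' : MonotoneRoot) (g : ℚ) : ℕ :=
  ((Finset.range M'.m).filter (fun l => M'.aDeg l < g)).card

lemma tcount_le (M' : MonotoneRoot) (g : ℚ) : tcount M' g ≤ M'.m := by
  calc tcount M' g ≤ (Finset.range M'.m).card := Finset.card_le_card (Finset.filter_subset _ _)
    _ = M'.m := Finset.card_range _

lemma tcount_char (M' : MonotoneRoot) (g : ℚ) {l : ℕ} (hl : l < M'.m) :
    M'.aDeg l < g ↔ l < tcount M' g := by
  classical
  unfold tcount
  constructor
  · intro h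
    have hsub : Finset.range (l + 1) ⊆ (Finset.range M'.m).filter (fun l => M'.aDeg l < g) := by
      intro l' hl'
      have hl'1 := Finset.mem_range.1 hl'
      rw [Finset.mem_filter, Finset.mem_range]
      refine ⟨by omega, lt_of_le_of_lt ?_ h⟩
      rw [M'.aDeg_left (by omega), M'.aDeg_left hl]
      exact M'.r_mono.monotone (by simp only [Fin.mk_le_mk]; omega)
    have := Finset.card_le_card hsub
    rw [Finset.card_range] at this
    calc l < l + 1 := by omega
      _ ≤ _ := this
  · intro h
    by_contra hc
    push_neg at hc
    have hsub : (Finset.range M'.m).filter (fun l => M'.aDeg l < g) ⊆ Finset.range l := by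
      intro l' hl'
      rw [Finset.mem_filter, Finset.mem_range] at hl'
      rw [Finset.mem_range]
      by_contra hc2
      push_neg at hc2
      have : M'.aDeg l ≤ M'.aDeg l' := by
        rw [M'.aDeg_left hl, M'.aDeg_left hl'.1]
        exact M'.r_mono.monotone (by simp only [Fin.mk_le_mk]; omega)
      exact absurd (lt_of_le_of_lt this hl'.2) (not_lt.2 hc)
    have := Finset.card_le_card hsub
    rw [Finset.card_range] at this
    omega

/-- trigger characterisation: an angle of `M'` has degree `≥ g` iff it lies in the
central block determined by `tcount`. -/
lemma trigger_char (M' : MonotoneRoot) (g : ℚ) {l : ℕ} (hl : l + 1 < 2*M'.m) :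
    g ≤ M'.aDeg l ↔ (tcount M' g ≤ l ∧ l + 1 ≤ 2*M'.m - 1 - tcount M' g) := by
  have hm' := M'.hm
  have hmin : min l (2*M'.m - 2 - l) < M'.m := by omega
  rw [M'.aDeg_min (by omega) hmin, ← M'.aDeg_left hmin]
  rw [← not_lt, tcount_char M' g hmin]
  omega

section Comb

variable {M M' : MonotoneRoot} {e : ℕ → ℕ → F2}

lemma step_lemma (he : GoodEps M M' e) {i : ℕ} (hi : i < M.m)
    (IH : ∀ l, ∀ hl : l < i, ∃ h1 : l < M'.m,
      M.h ⟨l, by omega⟩ = M'.h ⟨l, h1⟩ ∧ M.r ⟨l, by omega⟩ = M'.r ⟨l, h1⟩) :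
    i ≤ tcount M' (M.aDeg i) ∧
      ∃ ht' : tcount M' (M.aDeg i) < M'.m,
        M.h ⟨i, hi⟩ ≤ M'.h ⟨tcount M' (M.aDeg i), ht'⟩ := by
  classical
  have hm := M.hm
  have hm' := M'.hm
  set g := M.aDeg i with hg
  set t' := tcount M' g with ht'
  have htle : t' ≤ M'.m := tcount_le M' g
  -- the chain down the rows
  have hchain : ∀ Sf : Finset ℕ,
      (∀ l, l + 1 < 2*M'.m → g ≤ M'.aDeg l → (l ∈ Sf ↔ l + 1 ∈ Sf)) →
      ∑ j ∈ Sf, e (2*M.m - 1 - i) j = ∑ j ∈ Sf, e i j := by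
    intro Sf hcl
    have hK : ∀ k, k ≤ 2*M.m - 1 - 2*i → ∑ j ∈ Sf, e (i + k) j = ∑ j ∈ Sf, e i j := by
      intro k
      induction k with
      | zero => intro _; simp
      | succ kk ihk =>
          intro hk
          have h1 := ihk (by omega)
          rw [← h1]
          have hrow : i + kk + 1 < 2*M.m := by omega
          have hlevel : M.aDeg i ≤ M.aDeg (i + kk) := M.aDeg_mono hi (by omega) (by omega)
          have h2 := he.2.2.1 (i + kk) hrow Sf
            (fun l hl htrig => hcl l hl (le_trans hlevel htrig))
          rw [show i + (kk+1) = (i+kk) + 1 from rfl]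
          exact h2.symm
    have hfin := hK (2*M.m - 1 - 2*i) (le_refl _)
    rw [show i + (2*M.m - 1 - 2*i) = 2*M.m - 1 - i from by omega] at hfin
    exact hfin
  -- singleton reflection
  have hsing : ∀ j0, j0 < t' → e i j0 = e i (2*M'.m - 1 - j0) := by
    intro j0 hj0
    have hj0m : j0 < M'.m := by omega
    have hcls : ∀ l, l + 1 < 2*M'.m → g ≤ M'.aDeg l →
        (l ∈ ({j0} : Finset ℕ) ↔ l + 1 ∈ ({j0} : Finset ℕ)) := by
      intro l hl htrig
      have hc := (trigger_char M' g hl).1 htrig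
      simp only [Finset.mem_singleton]
      omega
    have e1 : e (2*M.m - 1 - i) j0 = e i j0 := by
      have := hchain {j0} hcls
      simpa using this
    have e2 : e (2*M.m - 1 - i) j0 = e i (2*M'.m - 1 - j0) := by
      have hIi : i + 1 < 2*M.m := by omega
      have := he.2.2.2 i (by omega) {j0}
        (by simp only [Finset.singleton_subset_iff, Finset.mem_range]; omega)
        (fun l hl htrig => hcls l hl (le_trans (M.aDeg_le_lDeg hIi) htrig))
      simpa using this
    rw [← e1, e2]
  -- the central block
  set Bc := (Finset.range (2*M'.m)).filter (fun j => t' ≤ j ∧ j ≤ 2*M'.m - 1 - t') with hBc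
  -- partition the full sum
  have hsum1 : ∑ j ∈ Finset.range (2*M'.m), e i j = 1 := he.2.1 i (by omega)
  have hsplit1 : ∑ j ∈ Finset.Ico 0 (2*M'.m), e i j
      = ∑ j ∈ Finset.Ico 0 t', e i j + ∑ j ∈ Finset.Ico t' (2*M'.m), e i j :=
    (Finset.sum_Ico_consecutive _ (by omega) (by omega)).symm
  have hsplit2 : ∑ j ∈ Finset.Ico t' (2*M'.m), e i j
      = ∑ j ∈ Finset.Ico t' (2*M'.m - t'), e i j
        + ∑ j ∈ Finset.Ico (2*M'.m - t') (2*M'.m), e i j :=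
    (Finset.sum_Ico_consecutive _ (by omega) (by omega)).symm
  have hmirror : ∑ j ∈ Finset.Ico (2*M'.m - t') (2*M'.m), e i j
      = ∑ j0 ∈ Finset.Ico 0 t', e i (2*M'.m - 1 - j0) := by
    refine Finset.sum_bij' (fun j _ => 2*M'.m - 1 - j) (fun j0 _ => 2*M'.m - 1 - j0)
      ?_ ?_ ?_ ?_ ?_
    · intro a ha
      simp only [Finset.mem_Ico] at ha ⊢
      omega
    · intro a ha
      simp only [Finset.mem_Ico] at ha ⊢
      omega
    · intro a ha
      simp only [Finset.mem_Ico] at ha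
      omega
    · intro a ha
      simp only [Finset.mem_Ico] at ha
      omega
    · intro a ha
      simp only [Finset.mem_Ico] at ha
      rw [show 2*M'.m - 1 - (2*M'.m - 1 - a) = a from by omega]
  have hcancel : ∑ j ∈ Finset.Ico 0 t', e i j
      + ∑ j0 ∈ Finset.Ico 0 t', e i (2*M'.m - 1 - j0) = 0 := by
    rw [← Finset.sum_add_distrib]
    refine Finset.sum_eq_zero fun j0 hj0 => ?_
    rw [Finset.mem_Ico] at hj0
    rw [← hsing j0 hj0.2]
    exact CharTwo.add_self_eq_zero _
  have hBsum : ∑ j ∈ Finset.Ico t' (2*M'.m - t'), e i j = 1 := by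
    have : (1 : F2) = ∑ j ∈ Finset.Ico 0 (2*M'.m), e i j := by
      rw [← hsum1]
      congr 1
      rw [Finset.range_eq_Ico]
    rw [hsplit1, hsplit2, hmirror] at this
    calc ∑ j ∈ Finset.Ico t' (2*M'.m - t'), e i j
        = (∑ j ∈ Finset.Ico 0 t', e i j + ∑ j0 ∈ Finset.Ico 0 t', e i (2*M'.m - 1 - j0))
          + ∑ j ∈ Finset.Ico t' (2*M'.m - t'), e i j := by rw [hcancel, zero_add]
      _ = 1 := by rw [this]; ring
  obtain ⟨j1, hj1mem, hj1⟩ := Finset.exists_ne_zero_of_sum_ne_zero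
    (by rw [hBsum]; exact one_ne_zero)
  rw [Finset.mem_Ico] at hj1mem
  obtain ⟨hj1N, hj1deg⟩ := he.1 i j1 (by omega) hj1
  -- t' < M'.m
  have htlt : t' < M'.m := by omega
  -- i ≤ t'
  have hit : i ≤ t' := by
    have hsub : Finset.range i ⊆ (Finset.range M'.m).filter (fun l => M'.aDeg l < g) := by
      intro l hl
      have hli := Finset.mem_range.1 hl
      obtain ⟨h1, hh, hr⟩ := IH l hli
      rw [Finset.mem_filter, Finset.mem_range]
      refine ⟨h1, ?_⟩
      rw [M'.aDeg_left h1, ← hr, hg, M.aDeg_left hi]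
      exact M.r_mono (by simp only [Fin.mk_lt_mk]; omega)
    have := Finset.card_le_card hsub
    rw [Finset.card_range] at this
    rw [ht', tcount]
    exact this
  refine ⟨hit, htlt, ?_⟩
  -- M.h i = lDeg i ≤ lDeg' j1 ≤ h' t'
  rw [← M.lDeg_left hi]
  refine le_trans hj1deg ?_
  rcases lt_or_ge j1 M'.m with hc | hc
  · rw [M'.lDeg_left hc]
    exact M'.h_anti.antitone (by simp only [Fin.mk_le_mk]; omega)
  · rw [M'.lDeg_right hc hj1N (by omega)]
    exact M'.h_anti.antitone (by simp only [Fin.mk_le_mk]; omega)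

end Comb
lemma comb_main {M M' : MonotoneRoot} {e e' : ℕ → ℕ → F2}
    (he : GoodEps M M' e) (he' : GoodEps M' M e') :
    ∀ i, ∀ hi : i < M.m, ∃ hi' : i < M'.m,
      M.h ⟨i, hi⟩ = M'.h ⟨i, hi'⟩ ∧ M.r ⟨i, hi⟩ = M'.r ⟨i, hi'⟩ := by
  intro i
  induction i using Nat.strong_induction_on with
  | _ i ih =>
    intro hi
    have IH1 : ∀ l, ∀ hl : l < i, ∃ h1 : l < M'.m,
        M.h ⟨l, by omega⟩ = M'.h ⟨l, h1⟩ ∧ M.r ⟨l, by omega⟩ = M'.r ⟨l, h1⟩ :=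
      fun l hl => ih l hl (by omega)
    obtain ⟨hit1, ht1m, hh1⟩ := step_lemma he hi IH1
    have hi' : i < M'.m := by omega
    have IH2 : ∀ l, ∀ hl : l < i, ∃ h1 : l < M.m,
        M'.h ⟨l, by omega⟩ = M.h ⟨l, h1⟩ ∧ M'.r ⟨l, by omega⟩ = M.r ⟨l, h1⟩ := by
      intro l hl
      obtain ⟨h1, hh, hr⟩ := ih l hl (by omega)
      exact ⟨by omega, hh.symm, hr.symm⟩
    obtain ⟨hit2, ht2m, hh2⟩ := step_lemma he' hi' IH2
    have hhe : M.h ⟨i, hi⟩ = M'.h ⟨i, hi'⟩ := by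
      have e1 : M.h ⟨i, hi⟩ ≤ M'.h ⟨i, hi'⟩ :=
        le_trans hh1 (M'.h_anti.antitone (by simp only [Fin.mk_le_mk]; omega))
      have e2 : M'.h ⟨i, hi'⟩ ≤ M.h ⟨i, hi⟩ :=
        le_trans hh2 (M.h_anti.antitone (by simp only [Fin.mk_le_mk]; omega))
      exact le_antisymm e1 e2
    have ht1i : tcount M' (M.aDeg i) = i := by
      by_contra hne
      have hgt : i + 1 ≤ tcount M' (M.aDeg i) := by omega
      have hlt : M'.h ⟨tcount M' (M.aDeg i), ht1m⟩ < M'.h ⟨i, hi'⟩ :=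
        M'.h_anti (by simp only [Fin.mk_lt_mk]; omega)
      have hcon := lt_of_le_of_lt hh1 hlt
      rw [hhe] at hcon
      exact lt_irrefl _ hcon
    have ht2i : tcount M (M'.aDeg i) = i := by
      by_contra hne
      have hgt : i + 1 ≤ tcount M (M'.aDeg i) := by omega
      have hlt : M.h ⟨tcount M (M'.aDeg i), ht2m⟩ < M.h ⟨i, hi⟩ :=
        M.h_anti (by simp only [Fin.mk_lt_mk]; omega)
      have hcon := lt_of_le_of_lt hh2 hlt
      rw [← hhe] at hcon
      exact lt_irrefl _ hcon
    have hr1 : M.r ⟨i, hi⟩ ≤ M'.r ⟨i, hi'⟩ := by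
      have hchar := tcount_char M' (M.aDeg i) hi'
      rw [ht1i] at hchar
      have hnl : ¬ (M'.aDeg i < M.aDeg i) := fun hc => absurd (hchar.1 hc) (lt_irrefl i)
      rw [M'.aDeg_left hi', M.aDeg_left hi] at hnl
      exact not_lt.1 hnl
    have hr2 : M'.r ⟨i, hi'⟩ ≤ M.r ⟨i, hi⟩ := by
      have hchar := tcount_char M (M'.aDeg i) hi
      rw [ht2i] at hchar
      have hnl : ¬ (M.aDeg i < M'.aDeg i) := fun hc => absurd (hchar.1 hc) (lt_irrefl i)
      rw [M'.aDeg_left hi', M.aDeg_left hi] at hnl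
      exact not_lt.1 hnl
    exact ⟨hi', hhe, le_antisymm hr1 hr2⟩
/-- Let `M = M(h₁,r₁;…;hₙ,rₙ)` and `M' = M(h'₁,r'₁;…;h'ₘ,r'ₘ)` be
monotone graded roots.  If their standard complexes with reflection involutions
`(C_*(M), J₀)` and `(C_*(M'), J₀')` are locally equivalent ι-complexes, then `n = m`,
`hᵢ = h'ᵢ` and `rᵢ = r'ᵢ` for all `i`, i.e. `M = M'`. -/
theorem monotone_root_determined_by_local_equivalence_class
    (M M' : MonotoneRoot) (A B : IotaCx)
    (hA : IsStandardCx A M) (hB : IsStandardCx B M')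
    (h : LocalEquiv A B) :
    M = M' := by
  obtain ⟨⟨F, hF⟩, ⟨G, hG⟩⟩ := h
  obtain ⟨SA⟩ := isStandardCx_stdData hA
  obtain ⟨SB⟩ := isStandardCx_stdData hB
  have he : GoodEps M M' (epsOf SA SB F) :=
    ⟨fun i j hi hne => eps_bound SA SB F hF hi hne,
     fun i hi => eps_row_sum SA SB F hF hi,
     fun i hi Sf hcl => eps_chain SA SB F hF hi Sf hcl,
     fun i hi Sf hsub hcl => eps_iota SA SB F hF hi Sf hsub hcl⟩
  have he' : GoodEps M' M (epsOf SB SA G) :=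
    ⟨fun i j hi hne => eps_bound SB SA G hG hi hne,
     fun i hi => eps_row_sum SB SA G hG hi,
     fun i hi Sf hcl => eps_chain SB SA G hG hi Sf hcl,
     fun i hi Sf hsub hcl => eps_iota SB SA G hG hi Sf hsub hcl⟩
  have hmain := comb_main he he'
  have hmain' := comb_main he' he
  have hmm : M.m = M'.m := by
    have h1 : M.m ≤ M'.m := by
      obtain ⟨hi', -, -⟩ := hmain (M.m - 1) (by have := M.hm; omega)
      have := M.hm
      omega
    have h2 : M'.m ≤ M.m := by
      obtain ⟨hi', -, -⟩ := hmain' (M'.m - 1) (by have := M'.hm; omega)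
      have := M'.hm
      omega
    omega
  have hhfun : ∀ i (hi : i < M.m) (hi' : i < M'.m),
      M.h ⟨i, hi⟩ = M'.h ⟨i, hi'⟩ ∧ M.r ⟨i, hi⟩ = M'.r ⟨i, hi'⟩ := by
    intro i hi hi'
    obtain ⟨hi2, hh, hr⟩ := hmain i hi
    exact ⟨hh, hr⟩
  cases M with
  | mk m1 hm1 h1 r1 a1 a2 a3 a4 =>
    cases M' with
    | mk m2 hm2 h2 r2 b1 b2 b3 b4 =>
      simp only at hmm hhfun
      subst hmm
      have hh : h1 = h2 := by
        funext i
        have := (hhfun i.val i.isLt i.isLt).1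
        simpa using this
      have hr : r1 = r2 := by
        funext i
        have := (hhfun i.val i.isLt i.isLt).2
        simpa using this
      subst hh
      subst hr
      rfl
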